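/- arXiv:2412.01780 — 7 statements merged into one kernel-verified Lean document; each statement's English description precedes it below -/
import Mathlib

section
/- Let F(x) = (1/2) xᵀ A x be a quadratic form in s variables with integral symmetric Hessian matrix A having even diagonal entries, and let L be the smallest positive integer with L·A⁻¹ integral. For integers d, q with q > 0 and gcd(d,q) = 1, and any r ∈ Z^s, the Gauss sum G(d, q; r) = Σ_{h ∈ (Z/qZ)^s} e((d·F(h) + h·r)/q) satisfies |G(d,q;r)| ≤ (gcd(L,q))^{s/2} · q^{s/2}. -/
/-!
The summand depends on `h` only modulo `q` (`F` is integral since `A` has even diagonal, so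
`F (h + q δ) ≡ F h` mod `q`), hence `G` is a sum over `V = (ℤ/qℤ)^s` of
`f x = ψ (d F x + x ⬝ r)` with `ψ` the standard character of `ℤ/qℤ`. Since
`F (x + y) = F x + F y + x ⬝ A y`, Weyl differencing gives
`|G|² = ∑_y f y ∑_x ψ (d x ⬝ A y)`, and the inner sum is `q^s` or `0` according as `d A y ≡ 0`
or not. As `d` is a unit mod `q`, this forces `A y ≡ 0`, hence `L y ≡ 0` because `L A⁻¹` is
integral; each coordinate of such `y` lies in a subgroup of `ℤ/qℤ` of order `gcd (L, q)`.
So `|G|² ≤ q^s gcd (L, q)^s`.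
-/

open scoped BigOperators

noncomputable def e (x : ℝ) : ℂ := Complex.exp (2 * (Real.pi : ℂ) * Complex.I * (x : ℂ))

open Finset Matrix

section Differencing

variable {V : Type*} [AddCommGroup V] [Fintype V]

theorem sum_mul_conj_sum_eq_of_map_add {f : V → ℂ} (φ : V → AddChar V ℂ) (hf : ∀ x, ‖f x‖ = 1)
    (hadd : ∀ x y, f (x + y) = f x * f y * φ y x) :
    (∑ x, f x) * starRingEnd ℂ (∑ x, f x) = ∑ y, f y * ∑ x, φ y x := by
  have hconj : ∀ x, f x * starRingEnd ℂ (f x) = 1 := fun x => by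
    rw [Complex.mul_conj, Complex.normSq_eq_norm_sq, hf]; norm_num
  calc (∑ x, f x) * starRingEnd ℂ (∑ x, f x)
      = ∑ x, ∑ y, f (x + y) * starRingEnd ℂ (f x) := by
        rw [map_sum, sum_mul_sum, sum_comm]
        exact sum_congr rfl fun x _ =>
          (Fintype.sum_equiv (Equiv.addLeft x) _ _ fun _ => rfl).symm
    _ = ∑ y, f y * ∑ x, φ y x := by
        simp_rw [mul_sum]
        rw [sum_comm]
        refine sum_congr rfl fun y _ => sum_congr rfl fun x _ => ?_
        rw [hadd]
        linear_combination (f y * φ y x) * hconj x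

open scoped Classical in
theorem norm_sq_sum_le_of_map_add {f : V → ℂ} (φ : V → AddChar V ℂ) (hf : ∀ x, ‖f x‖ = 1)
    (hadd : ∀ x y, f (x + y) = f x * f y * φ y x) :
    ‖∑ x, f x‖ ^ 2 ≤ Fintype.card V * #{y | φ y = 0} := by
  calc ‖∑ x, f x‖ ^ 2 = ‖∑ y, f y * ∑ x, φ y x‖ := by
        rw [← sum_mul_conj_sum_eq_of_map_add φ hf hadd, norm_mul, Complex.norm_conj, sq]
    _ ≤ ∑ y, ‖f y * ∑ x, φ y x‖ := norm_sum_le _ _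
    _ = ∑ y, if φ y = 0 then (Fintype.card V : ℝ) else 0 := by
        refine sum_congr rfl fun y _ => ?_
        rw [norm_mul, hf, one_mul, AddChar.sum_eq_ite]
        split_ifs <;> simp
    _ = Fintype.card V * #{y | φ y = 0} := by
        rw [sum_ite, sum_const_zero, add_zero, sum_const, nsmul_eq_mul, mul_comm]

end Differencing

theorem sum_sum_eq_zero_of_symm {R ι : Type*} [Ring R] [CharP R 2] [Fintype ι]
    (g : ι → ι → R) (hsymm : ∀ i j, g i j = g j i) (hdiag : ∀ i, g i i = 0) :
    ∑ i, ∑ j, g i j = 0 := by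
  rw [← sum_product']
  refine sum_involution (fun p _ => p.swap) (fun p _ => ?_) (fun p _ hp hswap => ?_)
    (fun p _ => mem_univ _) (fun p _ => rfl)
  · rw [Prod.fst_swap, Prod.snd_swap, ← hsymm, CharTwo.add_self_eq_zero]
  · obtain ⟨i, j⟩ := p
    obtain ⟨rfl, -⟩ : j = i ∧ i = j := Prod.mk.inj hswap
    exact hp (hdiag _)

section QuadForm

variable {ι : Type*} [Fintype ι] (A : Matrix ι ι ℤ)

def quadForm (h : ι → ℤ) : ℤ := h ⬝ᵥ A *ᵥ h / 2

variable {A} (hA : A.IsSymm) (hdiag : ∀ i, 2 ∣ A i i)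
include hA hdiag

theorem Matrix.IsSymm.two_dvd_dotProduct_mulVec_self (h : ι → ℤ) : 2 ∣ h ⬝ᵥ A *ᵥ h := by
  refine (ZMod.intCast_zmod_eq_zero_iff_dvd _ 2).mp ?_
  simp only [dotProduct, mulVec, mul_sum, Int.cast_sum, Int.cast_mul]
  refine sum_sum_eq_zero_of_symm _ (fun i j => ?_) (fun i => ?_)
  · rw [← hA.apply i j]; ring
  · rw [(ZMod.intCast_zmod_eq_zero_iff_dvd _ 2).mpr (hdiag i)]; ring

theorem two_mul_quadForm (h : ι → ℤ) : 2 * quadForm A h = h ⬝ᵥ A *ᵥ h :=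
  Int.mul_ediv_cancel' (hA.two_dvd_dotProduct_mulVec_self hdiag h)

theorem quadForm_add (a b : ι → ℤ) :
    quadForm A (a + b) = quadForm A a + quadForm A b + a ⬝ᵥ A *ᵥ b := by
  have hba : b ⬝ᵥ A *ᵥ a = a ⬝ᵥ A *ᵥ b := by
    rw [dotProduct_mulVec, dotProduct_comm, ← mulVec_transpose, hA.eq]
  apply mul_left_cancel₀ (two_ne_zero (α := ℤ))
  rw [mul_add, mul_add, two_mul_quadForm hA hdiag, two_mul_quadForm hA hdiag,
    two_mul_quadForm hA hdiag, mulVec_add, dotProduct_add, add_dotProduct, add_dotProduct, hba]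
  ring

theorem quadForm_smul (c : ℤ) (a : ι → ℤ) : quadForm A (c • a) = c ^ 2 * quadForm A a := by
  apply mul_left_cancel₀ (two_ne_zero (α := ℤ))
  rw [two_mul_quadForm hA hdiag, mulVec_smul, dotProduct_smul, smul_dotProduct,
    ← two_mul_quadForm hA hdiag, smul_eq_mul, smul_eq_mul]
  ring

end QuadForm

section Reduction

variable {ι : Type*} [Fintype ι] (A : Matrix ι ι ℤ) (q : ℕ)

-- `F` is reduced through integer representatives, since `ZMod q` cannot halve for even `q`;
-- `quadFormMod_intCast` shows that the choice of representatives does not matter.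
def quadFormMod (x : ι → ZMod q) : ZMod q := quadForm A fun i => ((x i).cast : ℤ)

variable {A} (hA : A.IsSymm) (hdiag : ∀ i, 2 ∣ A i i)
include hA hdiag

theorem quadFormMod_intCast (a : ι → ℤ) :
    quadFormMod A q (fun i => (a i : ZMod q)) = quadForm A a := by
  set b : ι → ℤ := fun i => ((a i : ZMod q).cast : ℤ)
  have hcong : ∀ i, ∃ c : ℤ, a i = b i + q * c := fun i => by
    obtain ⟨c, hc⟩ := (ZMod.intCast_eq_intCast_iff_dvd_sub (a i) (b i) q).mp
      (ZMod.intCast_zmod_cast _).symm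
    exact ⟨-c, by linarith⟩
  choose δ hδ using hcong
  change (quadForm A b : ZMod q) = _
  rw [show a = b + (q : ℤ) • δ from funext hδ, quadForm_add hA hdiag, quadForm_smul hA hdiag,
    mulVec_smul, dotProduct_smul, smul_eq_mul]
  simp

theorem quadFormMod_add (x y : ι → ZMod q) :
    quadFormMod A q (x + y) =
      quadFormMod A q x + quadFormMod A q y + x ⬝ᵥ A.map (Int.cast : ℤ → ZMod q) *ᵥ y := by
  obtain ⟨a, rfl⟩ : ∃ a : ι → ℤ, (fun i => (a i : ZMod q)) = x :=
    ⟨_, funext fun i => ZMod.intCast_zmod_cast (x i)⟩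
  obtain ⟨b, rfl⟩ : ∃ b : ι → ℤ, (fun i => (b i : ZMod q)) = y :=
    ⟨_, funext fun i => ZMod.intCast_zmod_cast (y i)⟩
  have hab : ((fun i => (a i : ZMod q)) + fun i => (b i : ZMod q)) =
      fun i => ((a + b) i : ZMod q) :=
    funext fun i => (Int.cast_add _ _).symm
  rw [hab, quadFormMod_intCast q hA hdiag, quadFormMod_intCast q hA hdiag,
    quadFormMod_intCast q hA hdiag, quadForm_add hA hdiag]
  simp [dotProduct, mulVec]

end Reduction

section DotProductChar

variable {ι R : Type*} [Fintype ι] [CommRing R]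

def dotProductChar (ψ : AddChar R ℂ) (c : ι → R) : AddChar (ι → R) ℂ :=
  ψ.compAddMonoidHom (AddMonoidHom.mk' (· ⬝ᵥ c) fun x y => add_dotProduct x y c)

@[simp]
theorem dotProductChar_apply (ψ : AddChar R ℂ) (c x : ι → R) :
    dotProductChar ψ c x = ψ (x ⬝ᵥ c) :=
  rfl

theorem dotProductChar_eq_zero_iff [DecidableEq ι] {ψ : AddChar R ℂ} (hψ : Function.Injective ψ)
    (c : ι → R) : dotProductChar ψ c = 0 ↔ c = 0 := by
  refine ⟨fun h => funext fun i => hψ ?_, fun h => by ext; simp [h]⟩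
  have := DFunLike.congr_fun h (Pi.single i 1)
  rwa [dotProductChar_apply, single_dotProduct, one_mul, AddChar.zero_apply,
    ← AddChar.map_zero_eq_one ψ] at this

end DotProductChar

theorem norm_sq_sum_stdAddChar_le {ι : Type*} [Fintype ι] [DecidableEq ι] {A : Matrix ι ι ℤ}
    {q : ℕ} [NeZero q] (hA : A.IsSymm) (hdiag : ∀ i, 2 ∣ A i i) (d : ZMod q) (r : ι → ZMod q) :
    ‖∑ x, ZMod.stdAddChar (d * quadFormMod A q x + x ⬝ᵥ r)‖ ^ 2 ≤
      q ^ Fintype.card ι * #{y | d • (A.map (Int.cast : ℤ → ZMod q) *ᵥ y) = 0} := by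
  set φ : (ι → ZMod q) → AddChar (ι → ZMod q) ℂ :=
    fun y => dotProductChar ZMod.stdAddChar (d • (A.map Int.cast *ᵥ y))
  have hadd : ∀ x y, ZMod.stdAddChar (d * quadFormMod A q (x + y) + (x + y) ⬝ᵥ r) =
      ZMod.stdAddChar (d * quadFormMod A q x + x ⬝ᵥ r) *
        ZMod.stdAddChar (d * quadFormMod A q y + y ⬝ᵥ r) * φ y x := fun x y => by
    rw [dotProductChar_apply, ← AddChar.map_add_eq_mul, ← AddChar.map_add_eq_mul,
      quadFormMod_add q hA hdiag, add_dotProduct, dotProduct_smul, smul_eq_mul]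
    ring_nf
  calc ‖∑ x, ZMod.stdAddChar (d * quadFormMod A q x + x ⬝ᵥ r)‖ ^ 2
      ≤ Fintype.card (ι → ZMod q) * #{y | φ y = 0} :=
        norm_sq_sum_le_of_map_add (f := fun x => ZMod.stdAddChar (d * quadFormMod A q x + x ⬝ᵥ r))
          φ (fun x => by rw [ZMod.stdAddChar_apply, Circle.norm_coe]) hadd
    _ = q ^ Fintype.card ι * #{y | d • (A.map (Int.cast : ℤ → ZMod q) *ᵥ y) = 0} := by
        simp [φ, dotProductChar_eq_zero_iff ZMod.injective_stdAddChar]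

theorem ZMod.card_nsmul_eq_zero_le_gcd (n q : ℕ) [NeZero q] :
    #{t : ZMod q | n • t = 0} ≤ n.gcd q := by
  calc #{t : ZMod q | n • t = 0} ≤ #{t : ZMod q | n.gcd q • t = 0} := by
        refine card_le_card fun t ht => ?_
        simp only [mem_filter, mem_univ, true_and, ← addOrderOf_dvd_iff_nsmul_eq_zero] at ht ⊢
        exact Nat.dvd_gcd ht (addOrderOf_dvd_iff_nsmul_eq_zero.mpr (by
          rw [nsmul_eq_mul, ZMod.natCast_self, zero_mul]))
    _ ≤ n.gcd q := IsAddCyclic.card_nsmul_eq_zero_le (Nat.gcd_pos_of_pos_right n (NeZero.pos q))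

theorem Matrix.map_intCast_natCast_smul_one {ι R : Type*} [DecidableEq ι] [Ring R] (L : ℕ) :
    ((L : ℤ) • (1 : Matrix ι ι ℤ)).map (Int.cast : ℤ → R) = L • 1 := by
  rw [Matrix.map_smul _ _ (fun a => by simp), Matrix.map_one _ Int.cast_zero Int.cast_one,
    natCast_zsmul]

theorem Matrix.map_intCast_mul {ι R : Type*} [Fintype ι] [Ring R] (M N : Matrix ι ι ℤ) :
    (M * N).map (Int.cast : ℤ → R) = M.map Int.cast * N.map Int.cast :=
  Matrix.map_mul (f := Int.castRingHom R)

section Kernel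

variable {ι : Type*} [Fintype ι] [DecidableEq ι]

theorem ZMod.card_pi_nsmul_eq_zero_le_gcd_pow (n q : ℕ) [NeZero q] :
    #{y : ι → ZMod q | n • y = 0} ≤ n.gcd q ^ Fintype.card ι := by
  have : ({y : ι → ZMod q | n • y = 0} : Finset _) =
      Fintype.piFinset fun _ => {t : ZMod q | n • t = 0} := by
    ext y; simp [funext_iff, Fintype.mem_piFinset]
  rw [this, Fintype.card_piFinset, prod_const, card_univ]
  exact Nat.pow_le_pow_left (ZMod.card_nsmul_eq_zero_le_gcd n q) _

variable {A : Matrix ι ι ℤ}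

theorem exists_intMatrix_mul_eq_smul_one (hdet : A.det ≠ 0) {L : ℕ}
    (hL : ∀ i j, ∃ z : ℤ, (L : ℚ) * (A.map (Int.cast : ℤ → ℚ))⁻¹ i j = z) :
    ∃ B : Matrix ι ι ℤ, B * A = (L : ℤ) • 1 := by
  choose B hB using hL
  have hunit : IsUnit (A.map (Int.cast : ℤ → ℚ)).det := by
    rw [← Int.cast_det]; simpa using hdet
  refine ⟨Matrix.of B, Matrix.map_injective (Int.cast_injective (α := ℚ)) ?_⟩
  have hBq : (Matrix.of B).map (Int.cast : ℤ → ℚ) = (L : ℚ) • (A.map Int.cast)⁻¹ := by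
    ext i j; simp [hB]
  beta_reduce
  rw [Matrix.map_intCast_mul, hBq, smul_mul, nonsing_inv_mul _ hunit,
    Matrix.map_intCast_natCast_smul_one, Nat.cast_smul_eq_nsmul]

theorem nsmul_eq_zero_of_mulVec_eq_zero {B : Matrix ι ι ℤ} {L q : ℕ}
    (hBA : B * A = (L : ℤ) • 1) {y : ι → ZMod q} (hy : A.map (Int.cast : ℤ → ZMod q) *ᵥ y = 0) :
    L • y = 0 := by
  calc L • y = (B * A).map (Int.cast : ℤ → ZMod q) *ᵥ y := by
        rw [hBA, Matrix.map_intCast_natCast_smul_one, smul_mulVec, one_mulVec]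
    _ = 0 := by rw [Matrix.map_intCast_mul, ← mulVec_mulVec, hy, mulVec_zero]

theorem card_smul_mulVec_eq_zero_le {B : Matrix ι ι ℤ} {L q : ℕ} [NeZero q]
    (hBA : B * A = (L : ℤ) • 1) {d : ZMod q} (hd : IsUnit d) :
    #{y : ι → ZMod q | d • (A.map (Int.cast : ℤ → ZMod q) *ᵥ y) = 0} ≤
      L.gcd q ^ Fintype.card ι := by
  refine le_trans (card_le_card fun y hy => ?_) (ZMod.card_pi_nsmul_eq_zero_le_gcd_pow L q)
  simp only [mem_filter, mem_univ, true_and, hd.smul_eq_zero] at hy ⊢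
  exact nsmul_eq_zero_of_mulVec_eq_zero hBA hy

end Kernel

theorem e_eq_stdAddChar {ι : Type*} [Fintype ι] {A : Matrix ι ι ℤ} (hA : A.IsSymm)
    (hdiag : ∀ i, 2 ∣ A i i) (d : ℤ) (q : ℕ) [NeZero q] (r : ι → ℤ) (h : ι → ℕ) :
    e ((((d : ℚ) * ((∑ i, ∑ j, (h i : ℚ) * (A i j : ℚ) * (h j : ℚ)) / 2)
        + ∑ i, (h i : ℚ) * (r i : ℚ)) / (q : ℚ) : ℚ) : ℝ) =
      ZMod.stdAddChar ((d : ZMod q) * quadFormMod A q (fun i => (h i : ZMod q)) +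
        (fun i => (h i : ZMod q)) ⬝ᵥ fun i => (r i : ZMod q)) := by
  set a : ι → ℤ := fun i => h i
  have hT : ∑ i, ∑ j, (h i : ℚ) * (A i j : ℚ) * (h j : ℚ) = 2 * (quadForm A a : ℚ) := by
    have := congrArg (Int.cast : ℤ → ℚ) (two_mul_quadForm hA hdiag a)
    push_cast [dotProduct, mulVec, mul_sum] at this
    simp [this, a, mul_assoc]
  have hx : (fun i => (h i : ZMod q)) = fun i => ((a i : ℤ) : ZMod q) := by simp [a]
  have harg : (d : ZMod q) * quadForm A a + (fun i => (a i : ZMod q)) ⬝ᵥ (fun i => (r i : ZMod q)) =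
      ((d * quadForm A a + a ⬝ᵥ r : ℤ) : ZMod q) := by
    push_cast [dotProduct]; rfl
  rw [hx, quadFormMod_intCast q hA hdiag, harg, ZMod.stdAddChar_coe, e]
  congr 1
  push_cast [hT, dotProduct, a]
  ring

theorem sum_piFinset_range_eq_sum_zmod {ι M : Type*} [Fintype ι] [DecidableEq ι]
    [AddCommMonoid M] (q : ℕ) [NeZero q] (g : (ι → ZMod q) → M) :
    ∑ h ∈ Fintype.piFinset (fun _ : ι => range q), g (fun i => (h i : ZMod q)) = ∑ x, g x := by
  refine sum_nbij' (fun h i => (h i : ZMod q)) (fun x i => (x i).val) (by simp) (fun x _ => ?_)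
    (fun h hh => funext fun i => ?_) (fun x _ => funext fun i => by simp) (fun _ _ => rfl)
  · simp [Fintype.mem_piFinset, ZMod.val_lt]
  · exact ZMod.val_cast_of_lt (mem_range.mp (Fintype.mem_piFinset.mp hh i))

theorem le_rpow_half_mul_rpow_half_of_sq_le {x a b : ℝ} (ha : 0 ≤ a) (hb : 0 ≤ b) (n : ℕ)
    (h : x ^ 2 ≤ a ^ n * b ^ n) : x ≤ a ^ ((n : ℝ) / 2) * b ^ ((n : ℝ) / 2) := by
  rw [← Real.mul_rpow ha hb]
  refine le_of_pow_le_pow_left₀ two_ne_zero (by positivity) (h.trans_eq ?_)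
  rw [← Real.rpow_mul_natCast (mul_nonneg ha hb), Nat.cast_ofNat, div_mul_cancel₀ _ two_ne_zero,
    Real.rpow_natCast, mul_pow]

/-- Bound for the Gauss sum `G(d,q;r) = Σ_{h ∈ (Z/qZ)^s} e((d·F(h) + h·r)/q)` attached to an
integral quadratic form `F(x) = (1/2) xᵀ A x` (A symmetric with even diagonal), where `L` is the
least positive integer such that `L·A⁻¹` is integral:
`|G(d,q;r)| ≤ gcd(L,q)^{s/2} q^{s/2}` whenever `gcd(d,q) = 1`. -/
theorem gauss_sum_bound (s : ℕ) (A : Matrix (Fin s) (Fin s) ℤ) (hA : A.IsSymm)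
    (hdiag : ∀ i, 2 ∣ A i i) (hdet : A.det ≠ 0)
    (L : ℕ)
    (hL : IsLeast {L' : ℕ | 0 < L' ∧ ∀ i j, ∃ z : ℤ,
      (L' : ℚ) * (((A.map (Int.cast : ℤ → ℚ))⁻¹) i j) = (z : ℚ)} L)
    (d : ℤ) (q : ℕ) (hq : 0 < q) (hdq : Int.gcd d q = 1) (r : Fin s → ℤ) :
    ‖(∑ h ∈ Fintype.piFinset (fun _ : Fin s => Finset.range q),
        e (((((d : ℚ) * ((∑ i, ∑ j, (h i : ℚ) * (A i j : ℚ) * (h j : ℚ)) / 2)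
          + ∑ i, (h i : ℚ) * (r i : ℚ)) / (q : ℚ) : ℚ) : ℝ)))‖
      ≤ (Nat.gcd L q : ℝ) ^ ((s : ℝ) / 2) * (q : ℝ) ^ ((s : ℝ) / 2) := by
  have : NeZero q := ⟨hq.ne'⟩
  obtain ⟨B, hB⟩ := exists_intMatrix_mul_eq_smul_one hdet hL.1.2
  have hd : IsUnit (d : ZMod q) :=
    (ZMod.unitOfIsCoprime d (Int.isCoprime_iff_gcd_eq_one.mpr hdq)).isUnit
  refine le_rpow_half_mul_rpow_half_of_sq_le (by positivity) (by positivity) s ?_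
  rw [sum_congr rfl fun h _ => e_eq_stdAddChar hA hdiag d q r h, sum_piFinset_range_eq_sum_zmod q
    (fun x => ZMod.stdAddChar ((d : ZMod q) * quadFormMod A q x + x ⬝ᵥ fun i => (r i : ZMod q)))]
  refine (norm_sq_sum_stdAddChar_le hA hdiag (d : ZMod q) (fun i => (r i : ZMod q))).trans ?_
  rw [mul_comm, Fintype.card_fin]
  gcongr
  exact_mod_cast (card_smul_mulVec_eq_zero_le hB hd).trans_eq (by rw [Fintype.card_fin])
end

section
/- Let A be the integral Hessian matrix of an integral quadratic form F in s variables (A symmetric with even diagonal entries), let q be a positive odd integer. Then there exist integer matrices D, P of size s×s such that D is diagonal, gcd(det(P), q) = 1, and D ≡ Pᵀ A P (mod q). -/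
/-!
Divisibility in `ZMod (p ^ k)` is total, since it is a quotient of the valuation ring `ℤ_[p]`,
and `2` is a unit there when `p` is odd. So among the entries of a symmetric matrix one, `aᵢⱼ`,
divides all the others. If no diagonal entry divides `aᵢⱼ`, then `aᵢᵢ = aᵢⱼ x` and
`aⱼⱼ = aᵢⱼ y` with `x, y` non-units, and the change of basis `eᵢ ↦ eᵢ + eⱼ` produces the
diagonal entry `aᵢⱼ (x + 2 + y)`, an associate of `aᵢⱼ` in the local ring `ZMod (p ^ k)`.
A diagonal pivot dividing every entry clears its row and column by a unipotent congruence,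
and induction on the size diagonalizes symmetric matrices over `ZMod (p ^ k)`. The Chinese
remainder theorem extends this to `ZMod q`, and lifting entries to `ℤ` gives `D` and `P`.
-/

theorem PreValuationRing.exists_forall_dvd {R ι : Type*} [Monoid R] [PreValuationRing R]
    [Finite ι] [Nonempty ι] (f : ι → R) : ∃ i, ∀ j, f i ∣ f j := by
  have : IsTrans R (fun a b => b ∣ a) := ⟨fun _ _ _ hab hbc => hbc.trans hab⟩
  have hdir : Directed (fun a b => b ∣ a) f := fun i j => by
    rcases ValuationRing.dvd_total (f i) (f j) with h | h
    exacts [⟨i, dvd_refl (f i), h⟩, ⟨j, h, dvd_refl (f j)⟩]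
  have := Fintype.ofFinite ι
  obtain ⟨i, hi⟩ := hdir.finset_le Finset.univ
  exact ⟨i, fun j => hi j (Finset.mem_univ j)⟩

theorem PreValuationRing.of_surjective {A B F : Type*} [Mul A] [Mul B] [PreValuationRing A]
    [FunLike F A B] [MulHomClass F A B] (f : F) (hf : Function.Surjective f) :
    PreValuationRing B where
  cond' a b := by
    obtain ⟨a, rfl⟩ := hf a
    obtain ⟨b, rfl⟩ := hf b
    obtain ⟨c, h | h⟩ := PreValuationRing.cond a b
    exacts [⟨f c, .inl (by rw [← map_mul, h])⟩, ⟨f c, .inr (by rw [← map_mul, h])⟩]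

theorem IsLocalRing.isUnit_add_two_add {R : Type*} [CommRing R] [IsLocalRing R]
    (h2 : IsUnit (2 : R)) {x y : R} (hx : ¬IsUnit x) (hy : ¬IsUnit y) : IsUnit (x + 2 + y) := by
  have hsum : IsUnit ((x + 2 + y) + -(x + y)) := by ring_nf; exact h2
  refine (isUnit_or_isUnit_of_isUnit_add hsum).resolve_right fun h => ?_
  rcases isUnit_or_isUnit_of_isUnit_add ((IsUnit.neg_iff _).mp h) with h | h
  exacts [hx h, hy h]

namespace Matrix

variable {l m n o R S : Type*} [CommRing R] [CommRing S]

theorem transpose_transvection [DecidableEq n] (i j : n) (c : R) :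
    (transvection i j c)ᵀ = transvection j i c := by
  simp [transvection, transpose_single]

theorem dvd_mul_mul_apply [Fintype m] [Fintype n] {d : R} {A : Matrix m n R}
    (h : ∀ i j, d ∣ A i j) (M : Matrix l m R) (N : Matrix n o R) (i : l) (j : o) :
    d ∣ (M * A * N) i j := by
  choose A' hA' using h
  have hA : A = d • of A' := by ext i j; simp [hA']
  rw [hA, Matrix.mul_smul, Matrix.smul_mul]
  exact Dvd.intro _ rfl

variable [Fintype m] [DecidableEq m] [Fintype n] [DecidableEq n]

def Congruent (A B : Matrix n n R) : Prop :=
  ∃ P : Matrix n n R, IsUnit P.det ∧ Pᵀ * A * P = B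

namespace Congruent

theorem refl (A : Matrix n n R) : A.Congruent A := ⟨1, by simp, by simp⟩

theorem trans {A B C : Matrix n n R} (hAB : A.Congruent B) (hBC : B.Congruent C) :
    A.Congruent C := by
  obtain ⟨P, hP, rfl⟩ := hAB
  obtain ⟨Q, hQ, rfl⟩ := hBC
  exact ⟨P * Q, by rw [det_mul]; exact hP.mul hQ, by simp only [transpose_mul, Matrix.mul_assoc]⟩

theorem isSymm {A B : Matrix n n R} (h : A.Congruent B) (hA : A.IsSymm) : B.IsSymm := by
  obtain ⟨P, -, rfl⟩ := h
  simp [IsSymm, transpose_mul, hA.eq, Matrix.mul_assoc]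

theorem submatrix {A B : Matrix n n R} (h : A.Congruent B) (e : m ≃ n) :
    (A.submatrix e e).Congruent (B.submatrix e e) := by
  obtain ⟨P, hP, rfl⟩ := h
  refine ⟨P.submatrix e e, by rwa [det_submatrix_equiv_self], ?_⟩
  rw [transpose_submatrix, submatrix_mul_equiv, submatrix_mul_equiv]

theorem map {A B : Matrix n n R} (h : A.Congruent B) (f : R →+* S) :
    (A.map f).Congruent (B.map f) := by
  obtain ⟨P, hP, rfl⟩ := h
  refine ⟨P.map f, ?_, ?_⟩
  · rw [← RingHom.mapMatrix_apply, ← RingHom.map_det]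
    exact hP.map f
  · simp [Matrix.map_mul, transpose_map]

theorem fromBlocks {A A' : Matrix m m R} {D D' : Matrix n n R} (hA : A.Congruent A')
    (hD : D.Congruent D') : (fromBlocks A 0 0 D).Congruent (fromBlocks A' 0 0 D') := by
  obtain ⟨P, hP, rfl⟩ := hA
  obtain ⟨Q, hQ, rfl⟩ := hD
  refine ⟨.fromBlocks P 0 0 Q, by rw [det_fromBlocks_zero₂₁]; exact hP.mul hQ, ?_⟩
  simp [fromBlocks_transpose, fromBlocks_multiply]

end Congruent

theorem congruent_submatrix_self (A : Matrix n n R) (σ : Equiv.Perm n) :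
    A.Congruent (A.submatrix σ σ) := by
  refine ⟨(1 : Matrix n n R).submatrix id σ, ?_, ?_⟩
  · rw [det_permute', det_one, mul_one]
    exact (Equiv.Perm.sign σ).isUnit.map (Int.castRingHom R)
  · rw [transpose_submatrix, transpose_one]
    exact (congrArg (· * _) (one_submatrix_mul σ (Equiv.refl n) A)).trans
      (mul_submatrix_one (Equiv.refl n) σ _)

theorem congruent_fromBlocks_of_eq_mul (B₁₁ : Matrix m m R) (B₂₁ : Matrix n m R)
    (B₂₂ : Matrix n n R) (X : Matrix n m R) (hB₂₂ : B₂₂.IsSymm) (h : B₂₁ = B₂₂ * X) :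
    (fromBlocks B₁₁ B₂₁ᵀ B₂₁ B₂₂).Congruent
      (fromBlocks (B₁₁ - Xᵀ * B₂₂ * X) 0 0 B₂₂) := by
  refine ⟨.fromBlocks 1 0 (-X) 1, by simp, ?_⟩
  subst h
  simp [fromBlocks_transpose, fromBlocks_multiply, transpose_mul, hB₂₂.eq, Matrix.mul_assoc,
    sub_eq_add_neg]

def CongruenceDiagonalizable (n R : Type*) [Fintype n] [DecidableEq n] [CommRing R] : Prop :=
  ∀ A : Matrix n n R, A.IsSymm → ∃ D : Matrix n n R, D.IsDiag ∧ A.Congruent D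

namespace CongruenceDiagonalizable

theorem of_subsingleton [Subsingleton R] : CongruenceDiagonalizable n R :=
  fun A _ => ⟨A, fun _ _ _ => Subsingleton.elim _ _, .refl A⟩

theorem of_equiv (e : m ≃ n) (h : CongruenceDiagonalizable m R) :
    CongruenceDiagonalizable n R := by
  intro A hA
  obtain ⟨D, hD, hAD⟩ := h (A.submatrix e e) (hA.submatrix e)
  refine ⟨D.submatrix e.symm e.symm, hD.submatrix e.symm.injective, ?_⟩
  simpa using hAD.submatrix e.symm

theorem of_ringEquiv (e : R ≃+* S) (h : CongruenceDiagonalizable n R) :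
    CongruenceDiagonalizable n S := by
  intro A hA
  obtain ⟨D, hD, hAD⟩ := h (A.map e.symm) (hA.map _)
  refine ⟨D.map e, hD.map (map_zero e), ?_⟩
  simpa [Matrix.map_map, Function.comp_def] using hAD.map (e : R →+* S)

theorem prod (hR : CongruenceDiagonalizable n R) (hS : CongruenceDiagonalizable n S) :
    CongruenceDiagonalizable n (R × S) := by
  intro A hA
  obtain ⟨D₁, hD₁, P₁, hP₁, h₁⟩ := hR _ (hA.map (RingHom.fst R S))
  obtain ⟨D₂, hD₂, P₂, hP₂, h₂⟩ := hS _ (hA.map (RingHom.snd R S))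
  set P : Matrix n n (R × S) := of fun i j => (P₁ i j, P₂ i j)
  refine ⟨of fun i j => (D₁ i j, D₂ i j), fun i j hij => by simp [hD₁ hij, hD₂ hij], P, ?_, ?_⟩
  · have hdet₁ : P.det.1 = P₁.det := RingHom.map_det (RingHom.fst R S) P
    have hdet₂ : P.det.2 = P₂.det := RingHom.map_det (RingHom.snd R S) P
    exact Prod.isUnit_iff.mpr ⟨hdet₁ ▸ hP₁, hdet₂ ▸ hP₂⟩
  · have e₁ : (Pᵀ * A * P).map (RingHom.fst R S) = D₁ := by
      rw [← h₁, Matrix.map_mul, Matrix.map_mul, transpose_map]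
      rfl
    have e₂ : (Pᵀ * A * P).map (RingHom.snd R S) = D₂ := by
      rw [← h₂, Matrix.map_mul, Matrix.map_mul, transpose_map]
      rfl
    ext i j
    · exact congrFun (congrFun e₁ i) j
    · exact congrFun (congrFun e₂ i) j

end CongruenceDiagonalizable

section PreValuationRing

variable [PreValuationRing R]

theorem IsSymm.exists_congruent_diag_dvd [Nontrivial R] (h2 : IsUnit (2 : R)) [Nonempty n]
    {A : Matrix n n R} (hA : A.IsSymm) :
    ∃ B : Matrix n n R, A.Congruent B ∧ ∃ k, ∀ i j, B k k ∣ B i j := by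
  obtain ⟨⟨i, j⟩, hij⟩ := PreValuationRing.exists_forall_dvd fun p : n × n => A p.1 p.2
  by_cases! hdiag : ∃ k, A k k ∣ A i j
  · obtain ⟨k, hk⟩ := hdiag
    exact ⟨A, .refl A, k, fun a b => hk.trans (hij (a, b))⟩
  have hne : i ≠ j := by
    rintro rfl
    exact hdiag i dvd_rfl
  obtain ⟨x, hx⟩ := hij (i, i)
  obtain ⟨y, hy⟩ := hij (j, j)
  have hxu : ¬IsUnit x := fun hu => hdiag i (by rw [hx]; exact hu.mul_right_dvd.mpr dvd_rfl)
  have hyu : ¬IsUnit y := fun hu => hdiag j (by rw [hy]; exact hu.mul_right_dvd.mpr dvd_rfl)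
  let P := transvection j i (1 : R)
  have hpiv : (Pᵀ * A * P) i i = A i j * (x + 2 + y) := by
    simp only [P, transpose_transvection, mul_transvection_apply_same,
      transvection_mul_apply_same]
    linear_combination hx + hy + hA.apply i j
  refine ⟨Pᵀ * A * P, ⟨P, by simp [P, hne.symm], rfl⟩, i, fun a b => ?_⟩
  rw [hpiv]
  exact (IsLocalRing.isUnit_add_two_add h2 hxu hyu).mul_right_dvd.mpr
    (dvd_mul_mul_apply (fun a b => hij (a, b)) _ _ a b)

theorem CongruenceDiagonalizable.sum_unit [Nontrivial R] (h2 : IsUnit (2 : R))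
    (h : CongruenceDiagonalizable m R) : CongruenceDiagonalizable (m ⊕ Unit) R := by
  intro A hA
  obtain ⟨B, hAB, k, hk⟩ := hA.exists_congruent_diag_dvd h2
  let r : m ⊕ Unit := .inr ()
  let C := B.submatrix (Equiv.swap k r) (Equiv.swap k r)
  have hAC : A.Congruent C := hAB.trans (congruent_submatrix_self B _)
  have hC : C.IsSymm := hAC.isSymm hA
  have hpiv : ∀ a b, C r r ∣ C a b := fun a b => by simpa [C] using hk _ _
  choose c hc using fun j => hpiv r (.inl j)
  let X : Matrix Unit m R := of fun _ j => c j
  have hCX : C.toBlocks₂₁ = C.toBlocks₂₂ * X := by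
    ext u j
    simp only [X, toBlocks₂₁, toBlocks₂₂, of_apply, mul_apply, Finset.univ_unique,
      Finset.sum_singleton]
    exact hc j
  have hC₁₂ : C.toBlocks₂₁ᵀ = C.toBlocks₁₂ := by
    ext i u
    exact hC.apply _ _
  have hC₂₂ : C.toBlocks₂₂.IsSymm := IsSymm.ext fun u v => by rw [Subsingleton.elim u v]
  have hblocks := congruent_fromBlocks_of_eq_mul C.toBlocks₁₁ _ _ X hC₂₂ hCX
  rw [hC₁₂, fromBlocks_toBlocks] at hblocks
  obtain ⟨D, hD, hD'⟩ := h _ (isSymm_fromBlocks_iff.mp (hblocks.isSymm hC)).1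
  exact ⟨.fromBlocks D 0 0 C.toBlocks₂₂, hD.fromBlocks (isDiag_of_subsingleton _),
    hAC.trans (hblocks.trans (hD'.fromBlocks (.refl _)))⟩

theorem congruenceDiagonalizable_of_preValuationRing (h2 : IsUnit (2 : R)) :
    CongruenceDiagonalizable n R := by
  rcases subsingleton_or_nontrivial R with _ | _
  · exact .of_subsingleton
  refine Fintype.induction_empty_option
    (P := fun α _ => ∀ [DecidableEq α], CongruenceDiagonalizable α R) ?_ ?_ ?_ n
  · intro α β _ e h _
    let _ : Fintype α := Fintype.ofEquiv β e.symm
    classical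
    exact h.of_equiv e
  · exact fun A _ => ⟨A, isDiag_of_subsingleton A, .refl A⟩
  · intro α _ h _
    classical
    exact (h.sum_unit h2).of_equiv (Equiv.optionEquivSumPUnit α).symm

end PreValuationRing

end Matrix

theorem ZMod.preValuationRing_prime_pow (p k : ℕ) [Fact p.Prime] :
    PreValuationRing (ZMod (p ^ k)) :=
  .of_surjective (PadicInt.toZModPow k) (ZMod.ringHom_surjective _)

theorem ZMod.isUnit_two_of_odd {q : ℕ} (hq : Odd q) : IsUnit (2 : ZMod q) := by
  simpa using (ZMod.isUnit_iff_coprime 2 q).mpr (Nat.coprime_two_left.mpr hq)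

theorem ZMod.intCast_valMinAbs_matrix {m n : Type*} {q : ℕ} (M : Matrix m n (ZMod q)) :
    (M.map ZMod.valMinAbs).map (Int.cast : ℤ → ZMod q) = M := by
  ext i j
  exact ZMod.coe_valMinAbs (M i j)

theorem Matrix.congruenceDiagonalizable_zmod {n : Type*} [Fintype n] [DecidableEq n] {q : ℕ}
    (hq : Odd q) : CongruenceDiagonalizable n (ZMod q) := by
  induction q using Nat.recOnPosPrimePosCoprime with
  | prime_pow p k hp _ =>
    have := Fact.mk hp
    have := ZMod.preValuationRing_prime_pow p k
    exact congruenceDiagonalizable_of_preValuationRing (ZMod.isUnit_two_of_odd hq)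
  | zero => exact absurd hq Nat.not_odd_zero
  | one => exact .of_subsingleton
  | coprime a b _ _ hab iha ihb =>
    obtain ⟨ha, hb⟩ := Nat.odd_mul.mp hq
    exact ((iha ha).prod (ihb hb)).of_ringEquiv (ZMod.chineseRemainder hab).symm

theorem diagonalize_mod_odd_general (s : ℕ) (A : Matrix (Fin s) (Fin s) ℤ) (hA : A.IsSymm)
    (q : ℕ) (hodd : Odd q) :
    ∃ D P : Matrix (Fin s) (Fin s) ℤ,
      (∀ i j, i ≠ j → D i j = 0) ∧
      Int.gcd P.det q = 1 ∧
      D.map (Int.cast : ℤ → ZMod q) = (P.transpose * A * P).map (Int.cast : ℤ → ZMod q) := by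
  obtain ⟨D, hD, P, hP, hPAP⟩ :=
    Matrix.congruenceDiagonalizable_zmod hodd (A.map (Int.cast : ℤ → ZMod q)) (hA.map _)
  refine ⟨D.map ZMod.valMinAbs, P.map ZMod.valMinAbs, hD.map (ZMod.valMinAbs_zero q), ?_, ?_⟩
  · have hdet : ((P.map ZMod.valMinAbs).det : ZMod q) = P.det := by
      rw [← eq_intCast (Int.castRingHom _), RingHom.map_det, RingHom.mapMatrix_apply,
        Int.coe_castRingHom, ZMod.intCast_valMinAbs_matrix]
    rw [← hdet, ZMod.coe_int_isUnit_iff_isCoprime] at hP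
    exact Int.isCoprime_iff_gcd_eq_one.mp hP.symm
  · rw [ZMod.intCast_valMinAbs_matrix, ← hPAP]
    change _ = (_ : Matrix _ _ ℤ).map (Int.castRingHom (ZMod q))
    rw [Matrix.map_mul, Matrix.map_mul, Matrix.transpose_map, Int.coe_castRingHom,
      ZMod.intCast_valMinAbs_matrix]

/-- Diagonalization of the Hessian of an integral quadratic form modulo an odd integer `q`:
there are integer matrices `D` (diagonal) and `P` with `gcd(det P, q) = 1` and
`D ≡ Pᵀ A P (mod q)`. -/
theorem diagonalize_mod_odd (s : ℕ) (A : Matrix (Fin s) (Fin s) ℤ) (hA : A.IsSymm)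
    (hdiag : ∀ i, 2 ∣ A i i) (q : ℕ) (hq : 0 < q) (hodd : Odd q) :
    ∃ D P : Matrix (Fin s) (Fin s) ℤ,
      (∀ i j, i ≠ j → D i j = 0) ∧
      Int.gcd P.det q = 1 ∧
      D.map (Int.cast : ℤ → ZMod q) = (P.transpose * A * P).map (Int.cast : ℤ → ZMod q) :=
  diagonalize_mod_odd_general s A hA q hodd
end

section
/- Let p be an odd prime, k a positive integer, and a an integer. Then |Σ_{v mod p^k, v² ≡ a (mod p^k)} e(2v/p^k)| ≤ 2, where e(t) = e^{2πit} and the sum is over residues v modulo p^k satisfying v² ≡ a (mod p^k). -/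
/-! Over `ZMod (p ^ k)` the sum is `∑_{x² = a} ψ (2 x)` for the standard additive character
`ψ`. If `a` is a unit, then `y² = x²` forces `y = ± x`, because `ZMod (p ^ k)` is local and `2`
is a unit: at most two terms of modulus one. If `a` is not a unit, every root `x` is divisible by
`p`. For `k = 1` this leaves only the root `0`; for `k ≥ 2`, `c = p ^ (k - 1)` satisfies
`c x = c ^ 2 = 0`, so `x ↦ x + c` permutes the roots and multiplies the sum by `ψ (2 c) ≠ 1`,
which makes it vanish. -/

open scoped BigOperators

open Finset

lemma e_intCast_div_natCast (m : ℤ) (n : ℕ) [NeZero n] :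
    e (m / n) = ZMod.stdAddChar (m : ZMod n) := by
  rw [ZMod.stdAddChar_coe, e]
  push_cast
  ring_nf

lemma ZMod.sum_filter_range_natCast {n : ℕ} [NeZero n] {M : Type*} [AddCommMonoid M]
    (P : ZMod n → Prop) [DecidablePred P] (f : ZMod n → M) :
    ∑ v ∈ (range n).filter (fun v : ℕ => P v), f v = ∑ x with P x, f x := by
  refine sum_nbij' (fun v => (v : ZMod n)) ZMod.val ?_ ?_ ?_ ?_ ?_ <;>
    simp +contextual [ZMod.val_lt, Nat.mod_eq_of_lt]

lemma AddChar.norm_sum_le_card {G ι : Type*} [AddLeftCancelMonoid G] [Finite G]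
    (ψ : AddChar G ℂ) (S : Finset ι) (f : ι → G) : ‖∑ i ∈ S, ψ (f i)‖ ≤ #S :=
  (norm_sum_le _ _).trans (by simp)

lemma AddChar.sum_eq_zero_of_add_mem {G R : Type*} [AddGroup G] [CommRing R] [IsDomain R]
    (ψ : AddChar G R) {S : Finset G} {c : G} (hS : ∀ x ∈ S, x + c ∈ S) (hc : ψ c ≠ 1) :
    ∑ x ∈ S, ψ x = 0 := by
  have hmap : S.map (Equiv.addRight c).toEmbedding = S :=
    eq_of_subset_of_card_le (fun y hy => by obtain ⟨x, hx, rfl⟩ := mem_map.1 hy; exact hS x hx)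
      (by simp)
  have hfix : ψ c * ∑ x ∈ S, ψ x = ∑ x ∈ S, ψ x := by
    conv_rhs => rw [← hmap]
    simp [mul_sum, AddChar.map_add_eq_mul, mul_comm]
  by_contra hne
  exact hc ((mul_eq_right₀ hne).1 hfix)

section LocalRing

variable {R : Type*} [CommRing R] [IsLocalRing R]

theorem IsLocalRing.eq_or_eq_neg_of_sq_eq_sq (h2 : IsUnit (2 : R)) {x y : R} (hx : IsUnit x)
    (h : y ^ 2 = x ^ 2) : y = x ∨ y = -x := by
  have hfac : (y - x) * (y + x) = 0 := by linear_combination h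
  by_cases hsub : IsUnit (y - x)
  · exact Or.inr (eq_neg_of_add_eq_zero_left (hsub.mul_right_eq_zero.1 hfac))
  · have hy : IsUnit y := (isUnit_pow_iff two_ne_zero).1 (h ▸ hx.pow 2)
    have hadd : IsUnit (y + x) := by
      by_contra hadd
      refine IsLocalRing.nonunits_add hsub hadd ?_
      rw [show y - x + (y + x) = 2 * y by ring]
      exact h2.mul hy
    exact Or.inl (sub_eq_zero.1 (hadd.mul_left_eq_zero.1 hfac))

theorem IsLocalRing.card_filter_sq_eq_le_two [Fintype R] [DecidableEq R] (h2 : IsUnit (2 : R))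
    {a : R} (ha : IsUnit a) : #{x | x ^ 2 = a} ≤ 2 := by
  obtain hempty | ⟨x, hx⟩ := (univ.filter (· ^ 2 = a)).eq_empty_or_nonempty
  · simp [hempty]
  have hxa : x ^ 2 = a := (mem_filter.1 hx).2
  have hsub : univ.filter (· ^ 2 = a) ⊆ {x, -x} := fun y hy => by
    simpa using eq_or_eq_neg_of_sq_eq_sq h2 ((isUnit_pow_iff two_ne_zero).1 (hxa ▸ ha))
      ((mem_filter.1 hy).2.trans hxa.symm)
  exact (card_le_card hsub).trans card_le_two

end LocalRing

namespace ZMod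

lemma isUnit_two_iff_odd {n : ℕ} : IsUnit (2 : ZMod n) ↔ Odd n := by
  simpa using isUnit_iff_coprime 2 n

variable {p k : ℕ} [hp : Fact p.Prime]

lemma exists_eq_natCast_mul_of_not_isUnit (hk : 0 < k) {x : ZMod (p ^ k)}
    (hx : ¬IsUnit x) : ∃ t, x = p * t := by
  rw [← natCast_zmod_val x, isUnit_natCast_iff_not_dvd_pow hp.out hk, not_not] at hx
  obtain ⟨t, ht⟩ := hx
  exact ⟨t, by rw [← natCast_zmod_val x, ht, Nat.cast_mul]⟩

theorem isLocalRing_prime_pow (hk : 0 < k) : IsLocalRing (ZMod (p ^ k)) := by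
  have : Nontrivial (ZMod (p ^ k)) := nontrivial_iff.2 (Nat.one_lt_pow hk.ne' hp.out.one_lt).ne'
  refine IsLocalRing.of_nonunits_add fun x y hx hy => ?_
  obtain ⟨t, rfl⟩ := exists_eq_natCast_mul_of_not_isUnit hk hx
  obtain ⟨s, rfl⟩ := exists_eq_natCast_mul_of_not_isUnit hk hy
  rw [← mul_add]
  exact fun h => prime_natCast_not_isUnit_pow hp.out hk (isUnit_of_mul_isUnit_left h)

lemma pow_pred_mul_eq_zero_of_not_isUnit (hk : 0 < k) {x : ZMod (p ^ k)}
    (hx : ¬IsUnit x) : (p : ZMod (p ^ k)) ^ (k - 1) * x = 0 := by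
  obtain ⟨t, rfl⟩ := exists_eq_natCast_mul_of_not_isUnit hk hx
  rw [← mul_assoc, ← pow_succ, Nat.sub_add_cancel hk, ← Nat.cast_pow, natCast_self, zero_mul]

lemma card_filter_sq_eq_le_one_of_not_isUnit {a : ZMod (p ^ 1)} (ha : ¬IsUnit a) :
    #{x | x ^ 2 = a} ≤ 1 := by
  have hsub : univ.filter (· ^ 2 = a) ⊆ {0} := fun x hx => by
    simpa using pow_pred_mul_eq_zero_of_not_isUnit one_pos
      fun hu => ha ((mem_filter.1 hx).2 ▸ hu.pow 2)
  exact (card_le_card hsub).trans_eq (card_singleton 0)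

theorem sum_filter_sq_eq_eq_zero_of_not_isUnit {R : Type*} [CommRing R] [IsDomain R]
    (hodd : Odd p) (hk : 2 ≤ k) (ψ : AddChar (ZMod (p ^ k)) R) (hψ : Function.Injective ψ)
    {a : ZMod (p ^ k)} (ha : ¬IsUnit a) : ∑ x with x ^ 2 = a, ψ (2 * x) = 0 := by
  set c : ZMod (p ^ k) := (p : ZMod (p ^ k)) ^ (k - 1) with hc
  have hcc : c ^ 2 = 0 := by
    rw [← pow_mul]
    exact pow_eq_zero_of_le (by omega : k ≤ (k - 1) * 2) (by rw [← Nat.cast_pow, natCast_self])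
  have hc0 : c ≠ 0 := by
    rw [hc, ← Nat.cast_pow, Ne, natCast_eq_zero_iff,
      Nat.pow_dvd_pow_iff_le_right hp.out.one_lt]
    omega
  have h2c : ψ (2 * c) ≠ 1 := by
    rw [← ψ.map_zero_eq_one, hψ.ne_iff]
    exact fun h => hc0 ((isUnit_two_iff_odd.2 hodd.pow).mul_right_eq_zero.1 h)
  have hinv : ∀ x ∈ univ.filter (· ^ 2 = a), x + c ∈ univ.filter (· ^ 2 = a) := by
    simp only [mem_filter, mem_univ, true_and]
    intro x hx
    have hcx : c * x = 0 :=
      pow_pred_mul_eq_zero_of_not_isUnit (by omega) fun hu => ha (hx ▸ hu.pow 2)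
    linear_combination hx + 2 * hcx + hcc
  simpa using (ψ.mulShift 2).sum_eq_zero_of_add_mem hinv (by simpa using h2c)

end ZMod

/-- For an odd prime `p`, `k ≥ 1`, and any integer `a`,
`|Σ_{v mod p^k, v² ≡ a (mod p^k)} e(2v/p^k)| ≤ 2`. -/
theorem square_root_exp_sum_bound (p : ℕ) (hp : p.Prime) (hodd : Odd p)
    (k : ℕ) (hk : 0 < k) (a : ℤ) :
    ‖(∑ v ∈ (Finset.range (p ^ k)).filter
        (fun v : ℕ => (v : ZMod (p ^ k)) ^ 2 = (a : ZMod (p ^ k))),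
      e ((2 * (v : ℝ)) / (p : ℝ) ^ k))‖ ≤ 2 := by
  have : Fact p.Prime := ⟨hp⟩
  have he (v : ℕ) : e (2 * v / p ^ k) = ZMod.stdAddChar (2 * (v : ZMod (p ^ k))) := by
    simpa using e_intCast_div_natCast (2 * v) (p ^ k)
  simp only [he, ZMod.sum_filter_range_natCast (· ^ 2 = (a : ZMod (p ^ k)))
    fun x => ZMod.stdAddChar (2 * x)]
  have := ZMod.isLocalRing_prime_pow (p := p) hk
  by_cases ha : IsUnit (a : ZMod (p ^ k))
  · refine ((ZMod.stdAddChar (N := p ^ k)).norm_sum_le_card _ _).trans ?_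
    exact_mod_cast IsLocalRing.card_filter_sq_eq_le_two (ZMod.isUnit_two_iff_odd.2 hodd.pow) ha
  obtain rfl | hk2 : k = 1 ∨ 2 ≤ k := by omega
  · refine ((ZMod.stdAddChar (N := p ^ 1)).norm_sum_le_card _ _).trans ?_
    exact_mod_cast (ZMod.card_filter_sq_eq_le_one_of_not_isUnit ha).trans one_le_two
  · rw [ZMod.sum_filter_sq_eq_eq_zero_of_not_isUnit hodd hk2 _ ZMod.injective_stdAddChar ha,
      norm_zero]
    exact zero_le_two
end

section
/- Let F(x) = (1/2)xᵀAx be a positive definite real quadratic form in s variables with Hessian A, let n > 0 and c ∈ R. Then lim_{ε→0⁺} (1/(2ε)) ∫_{|F(m)-n|<ε} c dm = c · (2π)^{s/2} / (Γ(s/2) √det(A)) · n^{s/2 - 1}. -/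
/-!
Writing `A = Bᵀ B`, the shell `{|F(m) - n| < ε}` is the preimage under `B` of the Euclidean
annulus `2(n - ε) < ‖x‖² < 2(n + ε)`, so its volume is
`ω_s ((2(n+ε))^{s/2} - (2(n-ε))^{s/2}) / √det A` with `ω_s = π^{s/2} / Γ(s/2 + 1)` the volume
of the unit ball. Divided by `2ε` this is, up to the factor `ω_s / √det A`, a symmetric
difference quotient of `t ↦ (2t)^{s/2}` at `n`, which tends to the derivative `s (2n)^{s/2-1}`;
`(s/2) / Γ(s/2 + 1) = 1 / Γ(s/2)` turns the result into the stated constant.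
-/

open Matrix MeasureTheory Real Set Filter Topology

-- This also holds at `x = 0` and at the poles, where Mathlib's `Gamma` is `0`.
theorem Real.div_Gamma_add_one (x : ℝ) : x / Gamma (x + 1) = (Gamma x)⁻¹ := by
  rcases eq_or_ne x 0 with rfl | hx
  · simp
  · rw [Gamma_add_one hx, div_mul_cancel_left₀ hx]

theorem Real.sqrt_pow_eq_rpow {x : ℝ} (hx : 0 ≤ x) (k : ℕ) : √x ^ k = x ^ ((k : ℝ) / 2) := by
  rw [sqrt_eq_rpow, ← rpow_natCast, ← rpow_mul hx, one_div_mul_eq_div]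

theorem HasDerivAt.tendsto_symmetric_slope_zero {f : ℝ → ℝ} {f' x : ℝ} (hf : HasDerivAt f f' x) :
    Tendsto (fun t => (f (x + t) - f (x - t)) / (2 * t)) (𝓝[≠] 0) (𝓝 f') := by
  have hright := hasDerivAt_iff_tendsto_slope_zero.1 hf
  have hleft := hasDerivAt_iff_tendsto_slope_zero.1
    (HasDerivAt.comp_const_sub x 0 (by rwa [sub_zero]))
  convert (hright.sub hleft).div_const 2 using 2
  · simp only [smul_eq_mul, zero_add, sub_zero]
    ring
  · ring

theorem EuclideanSpace.setOf_norm_sq_mem_Ioo {ι : Type*} [Fintype ι] {a b : ℝ} (ha : 0 ≤ a) :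
    {y : EuclideanSpace ℝ ι | ‖y‖ ^ 2 ∈ Ioo a b} = Metric.ball 0 √b \ Metric.closedBall 0 √a := by
  ext y
  simp [Real.lt_sqrt (norm_nonneg y), Real.sqrt_lt ha (norm_nonneg y), and_comm]

theorem volume_setOf_dotProduct_self_mem_Ioo {ι : Type*} [Fintype ι] {a b : ℝ} (ha : 0 ≤ a)
    (hab : a < b) :
    volume {x : ι → ℝ | x ⬝ᵥ x ∈ Ioo a b} = ENNReal.ofReal
      ((b ^ ((Fintype.card ι : ℝ) / 2) - a ^ ((Fintype.card ι : ℝ) / 2)) *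
        (π ^ ((Fintype.card ι : ℝ) / 2) / Gamma ((Fintype.card ι : ℝ) / 2 + 1))) := by
  cases isEmpty_or_nonempty ι with
  | inl hι =>
    have hempty : {x : ι → ℝ | x ⬝ᵥ x ∈ Ioo a b} = ∅ := by
      ext x
      simp [dotProduct, not_lt.2 ha]
    rw [hempty, measure_empty]
    simp
  | inr hι =>
    have hset : {x : ι → ℝ | x ⬝ᵥ x ∈ Ioo a b} =
        WithLp.toLp 2 ⁻¹' {y : EuclideanSpace ℝ ι | ‖y‖ ^ 2 ∈ Ioo a b} := by
      ext x
      rw [mem_preimage, mem_ofPred_eq, mem_ofPred_eq, EuclideanSpace.real_norm_sq_eq]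
      simp [dotProduct, sq]
    rw [hset, (PiLp.volume_preserving_toLp ι).measure_preimage (by measurability),
      EuclideanSpace.setOf_norm_sq_mem_Ioo ha,
      measure_sdiff (Metric.closedBall_subset_ball (Real.sqrt_lt_sqrt ha hab))
        measurableSet_closedBall.nullMeasurableSet measure_closedBall_lt_top.ne,
      EuclideanSpace.volume_ball, EuclideanSpace.volume_closedBall,
      ← ENNReal.ofReal_pow (sqrt_nonneg _), ← ENNReal.ofReal_pow (sqrt_nonneg _),
      ← ENNReal.ofReal_mul (by positivity), ← ENNReal.ofReal_mul (by positivity),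
      ← ENNReal.ofReal_sub _ (by positivity), ← sub_mul, sqrt_pow_eq_rpow ha,
      sqrt_pow_eq_rpow (ha.trans hab.le), sqrt_pow_eq_rpow pi_pos.le]

open scoped MatrixOrder in
theorem Matrix.PosDef.volume_setOf_dotProduct_mulVec_mem_Ioo {ι : Type*} [Fintype ι]
    [DecidableEq ι] {A : Matrix ι ι ℝ} (hA : A.PosDef) {a b : ℝ} (ha : 0 ≤ a) (hab : a < b) :
    volume {x : ι → ℝ | x ⬝ᵥ A *ᵥ x ∈ Ioo a b} = ENNReal.ofReal
      ((b ^ ((Fintype.card ι : ℝ) / 2) - a ^ ((Fintype.card ι : ℝ) / 2)) *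
        (π ^ ((Fintype.card ι : ℝ) / 2) / Gamma ((Fintype.card ι : ℝ) / 2 + 1)) / √A.det) := by
  obtain ⟨B, rfl⟩ := CStarAlgebra.nonneg_iff_eq_star_mul_self.mp hA.posSemidef.nonneg
  have hdet : (star B * B).det = B.det ^ 2 := by
    simp [det_mul, star_eq_conjTranspose, sq]
  have hB : B.det ≠ 0 := by simpa [hdet] using hA.det_pos.ne'
  have hset : {x : ι → ℝ | x ⬝ᵥ (star B * B) *ᵥ x ∈ Ioo a b} =
      Matrix.toLin' B ⁻¹' {y | y ⬝ᵥ y ∈ Ioo a b} := by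
    ext x
    simp [← mulVec_mulVec, dotProduct_mulVec, star_eq_conjTranspose, vecMul_transpose]
  rw [hset, Measure.addHaar_preimage_linearMap _ (by rwa [LinearMap.det_toLin']),
    volume_setOf_dotProduct_self_mem_Ioo ha hab, LinearMap.det_toLin', hdet,
    Real.sqrt_sq_eq_abs, abs_inv, ← ENNReal.ofReal_mul (inv_nonneg.2 (abs_nonneg _)),
    inv_mul_eq_div]

-- `sublevelVolume s t` is the volume of `{x ∈ ℝˢ | ‖x‖² / 2 < t}`, a ball of radius `√(2t)`.
noncomputable def sublevelVolume (s : ℕ) (t : ℝ) : ℝ :=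
  π ^ ((s : ℝ) / 2) / Gamma ((s : ℝ) / 2 + 1) * (2 * t) ^ ((s : ℝ) / 2)

theorem sublevelVolume_le_sublevelVolume (s : ℕ) {t u : ℝ} (ht : 0 ≤ t) (htu : t ≤ u) :
    sublevelVolume s t ≤ sublevelVolume s u := by
  unfold sublevelVolume
  gcongr

theorem hasDerivAt_sublevelVolume (s : ℕ) {t : ℝ} (ht : 0 < t) :
    HasDerivAt (sublevelVolume s)
      ((2 * π) ^ ((s : ℝ) / 2) / Gamma ((s : ℝ) / 2) * t ^ ((s : ℝ) / 2 - 1)) t := by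
  set k : ℝ := (s : ℝ) / 2
  have hpow : HasDerivAt (fun t => (2 * t) ^ k) (2 * k * (2 * t) ^ (k - 1)) t := by
    simpa using ((hasDerivAt_id t).const_mul 2).rpow_const (p := k) (Or.inl (by positivity))
  refine (hpow.const_mul (π ^ k / Gamma (k + 1))).congr_deriv ?_
  symm
  calc (2 * π) ^ k / Gamma k * t ^ (k - 1)
      = k / Gamma (k + 1) * (2 ^ k * π ^ k) * t ^ (k - 1) := by
        rw [div_Gamma_add_one, mul_rpow zero_le_two pi_pos.le]
        ring
    _ = π ^ k / Gamma (k + 1) * (2 * k * (2 * t) ^ (k - 1)) := by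
        rw [mul_rpow zero_le_two ht.le, rpow_sub_one two_ne_zero]
        ring

theorem Matrix.PosDef.measureReal_setOf_abs_half_dotProduct_mulVec_sub_lt {ι : Type*} [Fintype ι]
    [DecidableEq ι] {A : Matrix ι ι ℝ} (hA : A.PosDef) {t ε : ℝ} (hε : 0 < ε) (hεt : ε ≤ t) :
    volume.real {x : ι → ℝ | |(1 / 2) * (x ⬝ᵥ A *ᵥ x) - t| < ε} =
      (sublevelVolume (Fintype.card ι) (t + ε) - sublevelVolume (Fintype.card ι) (t - ε)) /
        √A.det := by
  have hset : {x : ι → ℝ | |(1 / 2) * (x ⬝ᵥ A *ᵥ x) - t| < ε} =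
      {x | x ⬝ᵥ A *ᵥ x ∈ Ioo (2 * (t - ε)) (2 * (t + ε))} := by
    ext x
    simp only [mem_ofPred_eq, mem_Ioo, abs_lt]
    constructor <;> rintro ⟨h₁, h₂⟩ <;> constructor <;> linarith
  have hmono := sublevelVolume_le_sublevelVolume (Fintype.card ι) (sub_nonneg.2 hεt)
    (by linarith : t - ε ≤ t + ε)
  rw [hset, measureReal_def, hA.volume_setOf_dotProduct_mulVec_mem_Ioo (by linarith) (by linarith)]
  convert ENNReal.toReal_ofReal (div_nonneg (sub_nonneg.2 hmono) (sqrt_nonneg _)) using 3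
  unfold sublevelVolume
  ring

/-- Density of real solutions to `F(m) = n` for a positive definite quadratic form
`F(x) = (1/2)xᵀAx`:
`lim_{ε→0⁺} (1/(2ε)) ∫_{|F(m)-n|<ε} c dm = c (2π)^{s/2} n^{s/2-1} / (Γ(s/2) √det A)`. -/
theorem shell_volume_limit (s : ℕ) (A : Matrix (Fin s) (Fin s) ℝ) (hA : A.PosDef)
    (n c : ℝ) (hn : 0 < n) :
    Filter.Tendsto
      (fun ε : ℝ => (1 / (2 * ε)) *
        ∫ _m in {m : Fin s → ℝ | |(1 / 2) * (m ⬝ᵥ A.mulVec m) - n| < ε}, c)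
      (nhdsWithin 0 (Set.Ioi 0))
      (nhds (c * (2 * Real.pi) ^ ((s : ℝ) / 2) /
        (Real.Gamma ((s : ℝ) / 2) * Real.sqrt A.det) * n ^ ((s : ℝ) / 2 - 1))) := by
  have hlim := ((hasDerivAt_sublevelVolume s hn).tendsto_symmetric_slope_zero.mono_left
    (nhdsGT_le_nhdsNE 0)).const_mul (c / √A.det)
  convert hlim.congr' ?_ using 2
  · ring
  filter_upwards [Ioo_mem_nhdsGT hn] with ε ⟨hε, hεn⟩
  rw [setIntegral_const, smul_eq_mul,
    hA.measureReal_setOf_abs_half_dotProduct_mulVec_sub_lt hε hεn.le, Fintype.card_fin]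
  ring
end

section
/- Let F be a positive definite real quadratic form in s variables, n > 0, 0 < ε < n, and let λ_s be the smallest eigenvalue of the Hessian of F. If m ∈ R^s satisfies |F(m) - n| < ε, then the point v = √(n/F(m))·m satisfies F(v) = n and ‖m - v‖ < (ε/(n-ε))·√((n+ε)/(2λ_s)). -/
/-!
Write `F = F(m)`, `t = √(n / F)` and `v = t • m`. Homogeneity gives `F(v) = t² F = n`. For the
distance, `‖m - v‖ = |1 - t| ‖m‖`. Rationalising, `1 - t = (F - n) / (√F (√F + √n))`, and both
`√F` and `√n` exceed `√(n - ε)`, so `|1 - t| < ε / (2 (n - ε))`. Diagonalising `A` orthogonally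
gives `λₛ ‖m‖² ≤ mᵀAm = 2F < 2 (n + ε)`. Multiplying the two bounds gives the claim.
-/

open scoped BigOperators
open Matrix

theorem Matrix.IsHermitian.mul_dotProduct_self_le_dotProduct_mulVec {ι : Type*} [Fintype ι]
    [DecidableEq ι] {A : Matrix ι ι ℝ} (hA : A.IsHermitian) {c : ℝ}
    (hc : ∀ i, c ≤ hA.eigenvalues i) (x : ι → ℝ) :
    c * (x ⬝ᵥ x) ≤ x ⬝ᵥ A *ᵥ x := by
  set U : Matrix ι ι ℝ := (hA.eigenvectorUnitary : Matrix ι ι ℝ)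
  have hU : star U * U = 1 := Unitary.star_mul_self_of_mem hA.eigenvectorUnitary.2
  obtain ⟨y, rfl⟩ : ∃ y, U *ᵥ y = x :=
    ⟨star U *ᵥ x, by
      rw [mulVec_mulVec, Unitary.mul_star_self_of_mem hA.eigenvectorUnitary.2, one_mulVec]⟩
  have hconj (B : Matrix ι ι ℝ) : U *ᵥ y ⬝ᵥ B *ᵥ U *ᵥ y = y ⬝ᵥ (star U * B * U) *ᵥ y := by
    conv_rhs => rw [← mulVec_mulVec, ← mulVec_mulVec, dotProduct_mulVec, star_eq_conjTranspose,
      conjTranspose_eq_transpose_of_trivial, vecMul_transpose]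
  have hquad : U *ᵥ y ⬝ᵥ A *ᵥ U *ᵥ y = ∑ i, hA.eigenvalues i * y i ^ 2 := by
    conv_lhs => rw [hA.spectral_theorem, Unitary.conjStarAlgAut_apply]
    rw [hconj]
    simp only [U, ← mul_assoc, Unitary.coe_star_mul_self, one_mul]
    simp [mul_assoc, dotProduct, mulVec_diagonal, sq, mul_left_comm]
  have hnorm : U *ᵥ y ⬝ᵥ U *ᵥ y = ∑ i, y i ^ 2 := by
    simpa [hU, dotProduct, sq] using hconj 1
  rw [hquad, hnorm, Finset.mul_sum]
  exact Finset.sum_le_sum fun i _ => mul_le_mul_of_nonneg_right (hc i) (sq_nonneg _)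

theorem abs_one_sub_sqrt_div_lt {F n ε : ℝ} (hεn : ε < n) (hF : |F - n| < ε) :
    |1 - √(n / F)| < ε / (2 * (n - ε)) := by
  obtain ⟨hFlo, hFhi⟩ := abs_lt.mp hF
  have hε : 0 < ε := (abs_nonneg _).trans_lt hF
  have hw : 0 < √(n - ε) := Real.sqrt_pos.mpr (by linarith)
  have hwr : √(n - ε) < √F := Real.sqrt_lt_sqrt (by linarith) (by linarith)
  have hwu : √(n - ε) < √n := Real.sqrt_lt_sqrt (by linarith) (by linarith)
  have hF0 : 0 < F := by linarith
  have hr : 0 < √F := Real.sqrt_pos.mpr hF0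
  have hden : 2 * (n - ε) < √F * (√F + √n) := by
    have := mul_lt_mul'' hwr hwu hw.le hw.le
    rw [Real.mul_self_sqrt (by linarith)] at this
    nlinarith [Real.mul_self_sqrt (by linarith : 0 ≤ F)]
  have hrat : 1 - √(n / F) = (F - n) / (√F * (√F + √n)) := by
    rw [Real.sqrt_div' _ hF0.le]
    field_simp
    linear_combination Real.sq_sqrt (by linarith : 0 ≤ F) - Real.sq_sqrt (by linarith : 0 ≤ n)
  rw [hrat, abs_div, abs_of_pos (a := √F * (√F + √n)) (by positivity),
    div_lt_div_iff₀ (by positivity) (by linarith)]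
  calc |F - n| * (2 * (n - ε)) < ε * (2 * (n - ε)) := by gcongr
    _ ≤ ε * (√F * (√F + √n)) := by gcongr

theorem Matrix.IsHermitian.sqrt_dotProduct_self_lt {ι : Type*} [Fintype ι] [DecidableEq ι]
    {A : Matrix ι ι ℝ} (hA : A.IsHermitian) {c b : ℝ} (hc0 : 0 < c)
    (hc : ∀ i, c ≤ hA.eigenvalues i) {x : ι → ℝ} (hx : (1 / 2) * (x ⬝ᵥ A *ᵥ x) < b) :
    √(x ⬝ᵥ x) < √(2 * b / c) := by
  have := hA.mul_dotProduct_self_le_dotProduct_mulVec hc x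
  refine Real.sqrt_lt_sqrt (dotProduct_self_star_nonneg x) ?_
  rw [lt_div_iff₀ hc0]
  linarith

theorem sqrt_sum_sub_mul_sq {ι : Type*} [Fintype ι] (t : ℝ) (x : ι → ℝ) :
    √(∑ i, (x i - t * x i) ^ 2) = |1 - t| * √(x ⬝ᵥ x) := by
  have : ∑ i, (x i - t * x i) ^ 2 = (1 - t) ^ 2 * (x ⬝ᵥ x) := by
    rw [dotProduct, Finset.mul_sum]
    exact Finset.sum_congr rfl fun i _ => by ring
  rw [this, Real.sqrt_mul (sq_nonneg _), Real.sqrt_sq_eq_abs]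

theorem rescaled_point_close_general (s : ℕ) (A : Matrix (Fin s) (Fin s) ℝ) (hA : A.PosDef)
    (lams : ℝ) (hlams : IsLeast (Set.range hA.1.eigenvalues) lams)
    (n ε : ℝ) (hn : 0 < n) (hεn : ε < n)
    (m : Fin s → ℝ) (hm : |(1 / 2) * (m ⬝ᵥ A.mulVec m) - n| < ε) :
    (1 / 2) * ((fun i => Real.sqrt (n / ((1 / 2) * (m ⬝ᵥ A.mulVec m))) * m i) ⬝ᵥ
        A.mulVec (fun i => Real.sqrt (n / ((1 / 2) * (m ⬝ᵥ A.mulVec m))) * m i)) = n ∧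
      Real.sqrt (∑ i, (m i - Real.sqrt (n / ((1 / 2) * (m ⬝ᵥ A.mulVec m))) * m i) ^ 2)
        < (ε / (n - ε)) * Real.sqrt ((n + ε) / (2 * lams)) := by
  set F := (1 / 2) * (m ⬝ᵥ A *ᵥ m)
  have hF0 : 0 < F := by linarith [(abs_lt.mp hm).1]
  have hlams_le : ∀ i, lams ≤ hA.1.eigenvalues i := fun i => hlams.2 ⟨i, rfl⟩
  have hlams0 : 0 < lams := by
    obtain ⟨i, rfl⟩ := hlams.1
    exact hA.eigenvalues_pos i
  refine ⟨?_, ?_⟩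
  · change (1 / 2) * ((√(n / F) • m) ⬝ᵥ A *ᵥ (√(n / F) • m)) = n
    rw [smul_dotProduct, mulVec_smul, dotProduct_smul, smul_eq_mul, smul_eq_mul]
    calc (1 / 2) * (√(n / F) * (√(n / F) * (m ⬝ᵥ A *ᵥ m))) = √(n / F) ^ 2 * F := by ring
      _ = n := by rw [Real.sq_sqrt (by positivity), div_mul_cancel₀ _ hF0.ne']
  · have hnorm := hA.1.sqrt_dotProduct_self_lt hlams0 hlams_le
      (by linarith [(abs_lt.mp hm).2] : F < n + ε)
    have hsqrt : √(2 * (n + ε) / lams) = 2 * √((n + ε) / (2 * lams)) := by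
      rw [show 2 * (n + ε) / lams = 2 ^ 2 * ((n + ε) / (2 * lams)) by field_simp,
        Real.sqrt_mul (by norm_num), Real.sqrt_sq (by norm_num)]
    calc √(∑ i, (m i - √(n / F) * m i) ^ 2) = |1 - √(n / F)| * √(m ⬝ᵥ m) :=
          sqrt_sum_sub_mul_sq _ m
      _ < ε / (2 * (n - ε)) * √(2 * (n + ε) / lams) :=
          mul_lt_mul'' (abs_one_sub_sqrt_div_lt hεn hm) hnorm (abs_nonneg _) (Real.sqrt_nonneg _)
      _ = ε / (n - ε) * √((n + ε) / (2 * lams)) := by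
          rw [hsqrt]
          field_simp

/-- If `F(x) = (1/2)xᵀAx` is positive definite with smallest eigenvalue `λₛ`, `0 < ε < n`, and
`|F(m) - n| < ε`, then `v = √(n/F(m))·m` satisfies `F(v) = n` and
`‖m - v‖ < (ε/(n-ε)) √((n+ε)/(2λₛ))`. -/
theorem rescaled_point_close (s : ℕ) (A : Matrix (Fin s) (Fin s) ℝ) (hA : A.PosDef)
    (lams : ℝ) (hlams : IsLeast (Set.range hA.1.eigenvalues) lams)
    (n ε : ℝ) (hn : 0 < n) (hε0 : 0 < ε) (hεn : ε < n)
    (m : Fin s → ℝ) (hm : |(1 / 2) * (m ⬝ᵥ A.mulVec m) - n| < ε) :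
    (1 / 2) * ((fun i => Real.sqrt (n / ((1 / 2) * (m ⬝ᵥ A.mulVec m))) * m i) ⬝ᵥ
        A.mulVec (fun i => Real.sqrt (n / ((1 / 2) * (m ⬝ᵥ A.mulVec m))) * m i)) = n ∧
      Real.sqrt (∑ i, (m i - Real.sqrt (n / ((1 / 2) * (m ⬝ᵥ A.mulVec m))) * m i) ^ 2)
        < (ε / (n - ε)) * Real.sqrt ((n + ε) / (2 * lams)) :=
  rescaled_point_close_general s A hA lams hlams n ε hn hεn m hm
end

section
/- Let f: R → C be a 1-periodic function that is continuous and satisfies conj(f(x)) = f(-x) for all x ∈ R. Then for any Q ≥ 1, ∫₀¹ f(x) dx = 2·Re( Σ_{1 ≤ q ≤ Q} Σ_{Q < d ≤ q+Q, gcd(d,q)=1} ∫₀^{1/(qd)} f(x - d̄/q) dx ), where d̄ denotes an integer with d·d̄ ≡ 1 (mod q). -/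
/-!
Induction on `N = ⌊Q⌋`, following the growth of the Farey sequence. The term `(q, d)` of the sum
is the integral over `[-d̄/q, -d̄/q + 1/(qd)]`, the right half of the Farey arc at `a/q`,
`a ≡ -d̄ (mod q)`, whose right neighbour has denominator `d - q`. Passing from `N` to `n = N + 1`
inserts a mediant of denominator `n` to the right of each `a/q` with `q` coprime to `n`: the term
`(q, n)` splits at `-n̄/q + 1/(q(q + n))` into the term `(q, q + n)` and a piece which, after the
reflection `x ↦ -x` (which conjugates the integral and so keeps its real part) and an integer
translation, is the term `(n, n + q)`; the translation is integral because
`n̄n + q̄q ≡ 1 (mod qn)`. The same splitting for `q = n = 1` gives the case `N = 1`, and the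
symmetry `conj (f x) = f (-x)` makes `∫₀¹ f` real.
-/

open Complex Finset Function ComplexConjugate

section FareySum

variable {M : Type*} [AddCommMonoid M]

theorem Int.sum_Ioc_add_one_right (φ : ℤ → M) {a b : ℤ} (h : a ≤ b) :
    ∑ d ∈ Ioc a (b + 1), φ d = ∑ d ∈ Ioc a b, φ d + φ (b + 1) := by
  rw [← insert_Ioc_right_eq_Ioc_add_one h, sum_insert (by simp), add_comm]

theorem Int.sum_Ioc_eq_add_sum_Ioc_add_one (φ : ℤ → M) {a b : ℤ} (h : a < b) :
    ∑ d ∈ Ioc a b, φ d = φ (a + 1) + ∑ d ∈ Ioc (a + 1) b, φ d := by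
  rw [← insert_Ioc_add_one_left_eq_Ioc h, sum_insert (by simp)]

theorem Int.sum_Ioc_add_natCast (φ : ℤ → M) (a : ℤ) (m : ℕ) :
    ∑ d ∈ Ioc a (a + m), φ d = ∑ k ∈ Icc 1 m, φ (a + k) := by
  induction m with
  | zero => simp
  | succ m ih =>
    rw [Nat.cast_succ, ← add_assoc, Int.sum_Ioc_add_one_right φ (by omega), ih,
      sum_Icc_succ_top (by omega), Nat.cast_succ, add_assoc]

noncomputable def fareySum (g : ℕ → ℤ → M) (N : ℕ) : M :=
  ∑ q ∈ Icc 1 N, ∑ d ∈ (Ioc (N : ℤ) (q + N)).filter (fun d => Int.gcd d q = 1), g q d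

theorem fareySum_one (g : ℕ → ℤ → M) : fareySum g 1 = g 1 2 := by
  rw [fareySum, Icc_self, sum_singleton, Nat.cast_one, show Ioc (1 : ℤ) (1 + 1) = {2} by decide]
  simp

theorem fareySum_succ {g : ℕ → ℤ → M}
    (hg : ∀ q n : ℕ, 0 < q → 0 < n → q.Coprime n → g q n = g q (q + n) + g n (n + q))
    {N : ℕ} (hN : 0 < N) : fareySum g (N + 1) = fareySum g N := by
  set φ : ℕ → ℤ → M := fun q d => if Int.gcd d q = 1 then g q d else 0 with hφ
  -- Row `q ≤ N` loses `d = N + 1` and gains `d = q + N + 1`; the new row `q = N + 1`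
  -- consists of the `d = N + 1 + q` with `q ≤ N`.
  have mediant : ∀ q ∈ Icc 1 N,
      φ q (N + 1) = φ q (q + (N + 1)) + φ (N + 1) (N + 1 + q) := by
    intro q hq
    simp only [hφ, Nat.cast_add, Nat.cast_one, Int.gcd_self_add_left, Int.gcd_comm (q : ℤ)]
    split_ifs with h
    · have hcop : q.Coprime (N + 1) := by
        rw [Nat.coprime_comm, Nat.Coprime, ← Int.gcd_natCast_natCast]
        exact_mod_cast h
      exact_mod_cast hg q (N + 1) (mem_Icc.1 hq).1 N.succ_pos hcop
    · rw [add_zero]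
  have row : ∀ q ∈ Icc 1 N,
      ∑ d ∈ Ioc (N : ℤ) (q + N), φ q d =
        φ q (N + 1) + ∑ d ∈ Ioc ((N : ℤ) + 1) (q + N), φ q d :=
    fun q hq => Int.sum_Ioc_eq_add_sum_Ioc_add_one _ (by simp at hq; omega)
  have row_succ : ∀ q ∈ Icc 1 N,
      ∑ d ∈ Ioc ((N : ℤ) + 1) (q + (N + 1)), φ q d =
        ∑ d ∈ Ioc ((N : ℤ) + 1) (q + N), φ q d + φ q (q + (N + 1)) := by
    intro q hq
    rw [← add_assoc, Int.sum_Ioc_add_one_right _ (by simp at hq; omega)]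
  have new_row : ∑ d ∈ Ioc ((N : ℤ) + 1) ((N + 1 : ℕ) + (N + 1)), φ (N + 1) d =
      ∑ q ∈ Icc 1 N, φ (N + 1) (N + 1 + q) := by
    have h_last : φ (N + 1) (N + 1 + (N + 1 : ℕ)) = 0 := by
      simp only [hφ, Nat.cast_add, Nat.cast_one, Int.gcd_self_add_left, Int.gcd_self]
      rw [if_neg (by omega)]
    rw [add_comm _ ((N : ℤ) + 1), Int.sum_Ioc_add_natCast, sum_Icc_succ_top (by omega), h_last,
      add_zero]
  simp only [fareySum, sum_filter]
  push_cast
  rw [sum_Icc_succ_top (by omega), sum_congr rfl row, sum_congr rfl row_succ, new_row,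
    sum_add_distrib, sum_add_distrib, sum_congr rfl mediant, sum_add_distrib]
  abel

theorem two_nsmul_fareySum {g : ℕ → ℤ → M}
    (hg : ∀ q n : ℕ, 0 < q → 0 < n → q.Coprime n → g q n = g q (q + n) + g n (n + q))
    {N : ℕ} (hN : 0 < N) : 2 • fareySum g N = g 1 1 := by
  induction N, hN using Nat.le_induction with
  | base =>
    have h11 := hg 1 1 one_pos one_pos (Nat.coprime_one_left 1)
    norm_num at h11
    rw [fareySum_one, two_nsmul, h11]
  | succ N hN ih => rw [fareySum_succ hg hN, ih]

end FareySum

theorem ZMod.dvd_val_inv_mul_sub_one {q n : ℕ} [NeZero q] (h : n.Coprime q) :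
    (q : ℤ) ∣ ((n : ZMod q)⁻¹.val * n : ℤ) - 1 := by
  rw [← ZMod.intCast_zmod_eq_zero_iff_dvd]
  push_cast
  rw [ZMod.natCast_zmod_val, ZMod.inv_mul_of_unit _ ((ZMod.isUnit_iff_coprime n q).2 h), sub_self]

theorem ZMod.mul_dvd_val_inv_mul_add_val_inv_mul_sub_one {q n : ℕ} [NeZero q] [NeZero n]
    (h : q.Coprime n) :
    (q * n : ℤ) ∣ ((n : ZMod q)⁻¹.val * n + (q : ZMod n)⁻¹.val * q : ℤ) - 1 := by
  refine (Nat.isCoprime_iff_coprime.2 h).mul_dvd ?_ ?_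
  · rw [add_sub_right_comm]
    exact dvd_add (ZMod.dvd_val_inv_mul_sub_one h.symm) (dvd_mul_left _ _)
  · rw [add_sub_assoc]
    exact dvd_add (dvd_mul_left _ _) (ZMod.dvd_val_inv_mul_sub_one h)

theorem Function.Periodic.intervalIntegral_add_int_mul {E : Type*} [NormedAddCommGroup E]
    [NormedSpace ℝ E] {f : ℝ → E} {T : ℝ} (hf : Periodic f T) (a b : ℝ) (k : ℤ) :
    ∫ x in (a + k * T)..(b + k * T), f x = ∫ x in a..b, f x := by
  rw [← intervalIntegral.integral_comp_add_right]
  exact intervalIntegral.integral_congr fun x _ => hf.int_mul k x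

section FareyArcs

variable {f : ℝ → ℂ}

theorem Function.Periodic.conj_intervalIntegral_of_conj_eq_neg {T : ℝ} (hf : Periodic f T)
    (hconj : ∀ x, conj (f x) = f (-x)) (a b : ℝ) (k : ℤ) :
    conj (∫ x in a..b, f x) = ∫ x in (k * T - b)..(k * T - a), f x := by
  rw [← intervalIntegral.intervalIntegral_conj]
  simp_rw [hconj]
  rw [intervalIntegral.integral_comp_neg, ← hf.intervalIntegral_add_int_mul _ _ k]
  simp only [neg_add_eq_sub]

theorem Function.Periodic.ofReal_re_intervalIntegral_of_conj_eq_neg (hf : Periodic f 1)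
    (hconj : ∀ x, conj (f x) = f (-x)) :
    ((∫ x in (0 : ℝ)..1, f x).re : ℂ) = ∫ x in (0 : ℝ)..1, f x :=
  conj_eq_iff_re.1 (by simpa using hf.conj_intervalIntegral_of_conj_eq_neg hconj 0 1 1)

noncomputable def fareyArcIntegral (f : ℝ → ℂ) (q : ℕ) (d : ℤ) : ℂ :=
  ∫ x in (0 : ℝ)..(1 / ((q : ℝ) * (d : ℝ))), f (x - (((d : ZMod q)⁻¹).val : ℝ) / (q : ℝ))

theorem fareyArcIntegral_eq (f : ℝ → ℂ) (q : ℕ) (d : ℤ) {b : ℕ}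
    (hb : ((d : ZMod q)⁻¹).val = b) :
    fareyArcIntegral f q d = ∫ x in -(b / q : ℝ)..-(b / q) + 1 / (q * d), f x := by
  rw [fareyArcIntegral, hb, intervalIntegral.integral_comp_sub_right]
  congr 1 <;> ring

theorem fareyArcIntegral_one_one (f : ℝ → ℂ) :
    fareyArcIntegral f 1 1 = ∫ x in (0 : ℝ)..1, f x := by
  rw [fareyArcIntegral_eq f 1 1 (Nat.lt_one_iff.mp (ZMod.val_lt _))]
  norm_num

theorem re_fareyArcIntegral_mediant (hper : Periodic f 1) (hcont : Continuous f)
    (hconj : ∀ x, conj (f x) = f (-x)) {q n : ℕ} (hq : 0 < q) (hn : 0 < n)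
    (hqn : q.Coprime n) :
    (fareyArcIntegral f q n).re =
      (fareyArcIntegral f q (q + n)).re + (fareyArcIntegral f n (n + q)).re := by
  have : NeZero q := ⟨hq.ne'⟩
  have : NeZero n := ⟨hn.ne'⟩
  set b := (n : ZMod q)⁻¹.val
  set e := (q : ZMod n)⁻¹.val
  obtain ⟨k, hk⟩ := ZMod.mul_dvd_val_inv_mul_add_val_inv_mul_sub_one hqn
  rw [fareyArcIntegral_eq f q n (b := b) (by simp [b]),
    fareyArcIntegral_eq f q (q + n) (b := b) (by simp [b]),
    fareyArcIntegral_eq f n (n + q) (b := e) (by simp [e])]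
  push_cast
  have hq' : (q : ℝ) ≠ 0 := by positivity
  have hn' : (n : ℝ) ≠ 0 := by positivity
  have hkR : (b * n + e * q : ℝ) - 1 = q * n * k := by exact_mod_cast hk
  have h_left : ((-k : ℤ) : ℝ) * 1 - (-(b / q) + 1 / (q * (q + n))) =
      -(e / n) + 1 / (n * (n + q)) := by
    push_cast; field_simp; linear_combination (n + q : ℝ) ^ 2 * hkR
  have h_right : ((-k : ℤ) : ℝ) * 1 - (-(b / q) + 1 / (q * n)) = -(e / n) := by
    push_cast; field_simp; linear_combination hkR
  rw [← intervalIntegral.integral_add_adjacent_intervals (b := -(b / q : ℝ) + 1 / (q * (q + n)))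
    (hcont.intervalIntegrable _ _) (hcont.intervalIntegrable _ _), add_re,
    ← conj_re (∫ x in -(b / q : ℝ) + 1 / (q * (q + n))..-(b / q) + 1 / (q * n), f x),
    hper.conj_intervalIntegral_of_conj_eq_neg hconj _ _ (-k), h_left, h_right]

theorem re_intervalIntegral_eq_two_mul_fareySum (hper : Periodic f 1) (hcont : Continuous f)
    (hconj : ∀ x, conj (f x) = f (-x)) {N : ℕ} (hN : 0 < N) :
    (∫ x in (0 : ℝ)..1, f x).re = 2 * fareySum (fun q d => (fareyArcIntegral f q d).re) N := by
  rw [← fareyArcIntegral_one_one, two_mul, ← two_nsmul]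
  exact (two_nsmul_fareySum (g := fun q d => (fareyArcIntegral f q d).re)
    (fun _ _ => re_fareyArcIntegral_mediant hper hcont hconj) hN).symm

end FareyArcs

/-- The Kloosterman-style Farey dissection identity: for a continuous 1-periodic `f : ℝ → ℂ`
with `conj (f x) = f (-x)` and any `Q ≥ 1`,
`∫₀¹ f = 2 Re ( Σ_{1 ≤ q ≤ Q} Σ_{Q < d ≤ q+Q, gcd(d,q)=1} ∫₀^{1/(qd)} f(x - d̄/q) dx )`,
where `d̄` is the inverse of `d` modulo `q`. -/
theorem kloosterman_farey_identity (f : ℝ → ℂ) (hper : Function.Periodic f 1)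
    (hcont : Continuous f) (hconj : ∀ x : ℝ, (starRingEnd ℂ) (f x) = f (-x))
    (Q : ℝ) (hQ : 1 ≤ Q) :
    (∫ x in (0 : ℝ)..1, f x) =
      2 * ((∑ q ∈ Finset.Icc 1 ⌊Q⌋₊,
        ∑ d ∈ (Finset.Ioc ⌊Q⌋ ⌊(q : ℝ) + Q⌋).filter (fun d => Int.gcd d q = 1),
          ∫ x in (0 : ℝ)..(1 / ((q : ℝ) * (d : ℝ))),
            f (x - (((d : ZMod q)⁻¹).val : ℝ) / (q : ℝ))).re : ℂ) := by
  have hfloor : ⌊Q⌋ = ⌊Q⌋₊ := (Int.natCast_floor_eq_floor (by linarith)).symm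
  rw [← hper.ofReal_re_intervalIntegral_of_conj_eq_neg hconj,
    re_intervalIntegral_eq_two_mul_fareySum hper hcont hconj (Nat.floor_pos.2 hQ)]
  simp only [fareySum, fareyArcIntegral, re_sum, Int.floor_natCast_add, hfloor]
  push_cast
  rfl
end

section
/- Let q₀, q₁ be coprime positive integers, q = q₀q₁, F an integral quadratic form in s variables, n an integer, ℓ an integer, and r ∈ Z^s. Define K(ℓ,n,r;q) = Σ_{d ∈ (Z/qZ)^×} e((ℓd + n·d̄)/q) · G(-d̄, q; r), where G(c,q;r) = Σ_{h ∈ (Z/qZ)^s} e((c·F(h) + h·r)/q). Then K(ℓ,n,r;q) = K^{(q₁)}(ℓ,n,r;q₀) · K^{(q₀)}(ℓ,n,r;q₁), where K^{(q₁)}(ℓ,n,r;q₀) = Σ_{d₀ ∈ (Z/q₀Z)^×} e(q̄₁(ℓd₀ + n·d̄₀)/q₀) · G(-q̄₁·d̄₀, q₀; q̄₁·r) and symmetrically for K^{(q₀)}, with q̄₁ the inverse of q₁ mod q₀ and q̄₀ the inverse of q₀ mod q₁. -/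
/-!
Write `e(a/q)` as the standard additive character `ψ_q` of `ZMod q`, and `F` as the integral
polynomial `xᵀ B x` with `B` upper triangular and `B + Bᵀ = A`. Then `K` and its twisted factors
become sums of `ψ_q(t · φ(d, x))` over `(ZMod q)ˣ × (ZMod q)^s`, where the phase
`φ(d, x) = ℓd + n d̄ - d̄ F(x) + x · r` has integer coefficients. The Chinese remainder isomorphism
`ZMod (q₀q₁) ≅ ZMod q₀ × ZMod q₁` splits the index set, commutes with `φ`, and splits the character
as `ψ_{q₀q₁}(a) = ψ_{q₀}(q̄₁ a) ψ_{q₁}(q̄₀ a)`; hence the sum factors.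
-/

open scoped BigOperators

/-- The Gauss sum `G(c, q; r) = Σ_{h ∈ (Z/qZ)^s} e((c·F(h) + h·r)/q)` attached to the
integral quadratic form `F(h) = (1/2) hᵀ A h`. -/
noncomputable def quadGaussSum (s : ℕ) (A : Matrix (Fin s) (Fin s) ℤ)
    (c : ℤ) (q : ℕ) (r : Fin s → ℤ) : ℂ :=
  ∑ h ∈ Fintype.piFinset (fun _ : Fin s => Finset.range q),
    e (((((c : ℚ) * ((∑ i, ∑ j, (h i : ℚ) * (A i j : ℚ) * (h j : ℚ)) / 2)
      + ∑ i, (h i : ℚ) * (r i : ℚ)) / (q : ℚ) : ℚ) : ℝ))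

/-- `K(ℓ,n,r;q) = Σ_{d ∈ (Z/qZ)ˣ} e((ℓd + n d̄)/q) G(-d̄, q; r)`. -/
noncomputable def Ksum (s : ℕ) (A : Matrix (Fin s) (Fin s) ℤ)
    (ℓ n : ℤ) (r : Fin s → ℤ) (q : ℕ) : ℂ :=
  ∑ d ∈ (Finset.range q).filter (fun d => Nat.Coprime d q),
    e ((((ℓ * d + n * (((d : ZMod q)⁻¹).val : ℤ) : ℤ) : ℝ)) / q) *
      quadGaussSum s A (-(((d : ZMod q)⁻¹).val : ℤ)) q r

/-- The twisted factor `K^{(q')}(ℓ,n,r;q)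
  = Σ_{d ∈ (Z/qZ)ˣ} e(q̄'(ℓd + n d̄)/q) G(-q̄' d̄, q; q̄' r)`,
where `q̄'` is the inverse of `q'` modulo `q`. -/
noncomputable def KsumTwist (s : ℕ) (A : Matrix (Fin s) (Fin s) ℤ)
    (ℓ n : ℤ) (r : Fin s → ℤ) (q' q : ℕ) : ℂ :=
  ∑ d ∈ (Finset.range q).filter (fun d => Nat.Coprime d q),
    e (((((((q' : ZMod q)⁻¹).val : ℤ) * (ℓ * d + n * (((d : ZMod q)⁻¹).val : ℤ)) : ℤ) : ℝ)) / q) *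
      quadGaussSum s A (-((((q' : ZMod q)⁻¹).val : ℤ) * (((d : ZMod q)⁻¹).val : ℤ))) q
        (fun i => ((((q' : ZMod q)⁻¹).val : ℤ)) * r i)

open Finset ZMod
open scoped Matrix

section QuadForm

variable {ι R S : Type*} [CommRing R] [CommRing S]

/-- The upper-triangular `B` with `B + Bᵀ = A`; it makes `(1/2) xᵀ A x` a polynomial over `ℤ`. -/
def upperHalf [LinearOrder ι] (A : Matrix ι ι ℤ) : Matrix ι ι ℤ :=
  Matrix.of fun i j => if i < j then A i j else if i = j then A i i / 2 else 0

theorem upperHalf_add_transpose [LinearOrder ι] {A : Matrix ι ι ℤ} (hA : A.IsSymm)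
    (hdiag : ∀ i, 2 ∣ A i i) : upperHalf A + (upperHalf A)ᵀ = A := by
  ext i j
  simp only [upperHalf, Matrix.add_apply, Matrix.transpose_apply, Matrix.of_apply]
  rcases lt_trichotomy i j with hij | rfl | hij
  · simp [hij, hij.ne', not_lt_of_gt hij]
  · simp only [lt_irrefl, if_false, if_true]
    have := hdiag i
    omega
  · simp [hij, hij.ne', not_lt_of_gt hij, hA.apply i j]

variable [Fintype ι]

def intQuadForm (B : Matrix ι ι ℤ) (x : ι → R) : R := ∑ i, ∑ j, x i * B i j * x j

theorem map_intQuadForm (f : R →+* S) (B : Matrix ι ι ℤ) (x : ι → R) :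
    f (intQuadForm B x) = intQuadForm B (f ∘ x) := by
  simp [intQuadForm]

theorem intCast_intQuadForm (B : Matrix ι ι ℤ) (x : ι → ℤ) :
    ((intQuadForm B x : ℤ) : R) = intQuadForm B fun i => (x i : R) :=
  map_intQuadForm (Int.castRingHom R) B x

theorem two_mul_intQuadForm (B : Matrix ι ι ℤ) (x : ι → R) :
    2 * intQuadForm B x = intQuadForm (B + Bᵀ) x := by
  have hT : intQuadForm Bᵀ x = intQuadForm B x := by
    rw [intQuadForm, intQuadForm, Finset.sum_comm]
    exact sum_congr rfl fun i _ => sum_congr rfl fun j _ => by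
      simp only [Matrix.transpose_apply]; ring
  rw [two_mul]
  nth_rw 2 [← hT]
  simp only [intQuadForm, ← sum_add_distrib, Matrix.add_apply, Int.cast_add]
  exact sum_congr rfl fun i _ => sum_congr rfl fun j _ => by ring

end QuadForm

theorem e_intCast_div (m : ℤ) (q : ℕ) [NeZero q] : e ((m : ℝ) / q) = stdAddChar (m : ZMod q) := by
  rw [e, stdAddChar_coe]
  push_cast
  ring_nf

theorem castHom_prod_castHom_bijective {q₀ q₁ : ℕ} (hco : q₀.Coprime q₁) :
    Function.Bijective ((castHom (dvd_mul_right q₀ q₁) (ZMod q₀)).prod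
      (castHom (dvd_mul_left q₁ q₀) (ZMod q₁))) := by
  convert (chineseRemainder hco).bijective
  ext a <;> obtain ⟨m, rfl⟩ := intCast_surjective a <;> simp

/-- Holds because `q̄₁ q₁ + q̄₀ q₀ ≡ 1 (mod q₀ q₁)`. -/
theorem stdAddChar_eq_mul_of_coprime {q₀ q₁ : ℕ} [NeZero q₀] [NeZero q₁] (hco : q₀.Coprime q₁)
    (a : ZMod (q₀ * q₁)) :
    stdAddChar a = stdAddChar ((q₁ : ZMod q₀)⁻¹ * castHom (dvd_mul_right q₀ q₁) (ZMod q₀) a) *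
      stdAddChar ((q₀ : ZMod q₁)⁻¹ * castHom (dvd_mul_left q₁ q₀) (ZMod q₁) a) := by
  obtain ⟨m, rfl⟩ := intCast_surjective a
  obtain ⟨u₁, hu₁⟩ := intCast_surjective (q₁ : ZMod q₀)⁻¹
  obtain ⟨u₀, hu₀⟩ := intCast_surjective (q₀ : ZMod q₁)⁻¹
  have hunit : ((u₁ * q₁ + u₀ * q₀ : ℤ) : ZMod (q₀ * q₁)) = 1 := by
    apply (castHom_prod_castHom_bijective hco).injective
    simp only [map_intCast, map_one, Prod.ext_iff, Prod.fst_intCast, Prod.snd_intCast,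
      Prod.fst_one, Prod.snd_one]
    push_cast
    rw [hu₁, hu₀, natCast_self, natCast_self, mul_zero, mul_zero, add_zero, zero_add]
    exact ⟨ZMod.inv_mul_of_unit _ ((isUnit_iff_coprime _ _).2 hco.symm),
      ZMod.inv_mul_of_unit _ ((isUnit_iff_coprime _ _).2 hco)⟩
  conv_lhs => rw [← one_mul (m : ZMod (q₀ * q₁)), ← hunit, ← Int.cast_mul]
  simp only [map_intCast, ← hu₁, ← hu₀, ← Int.cast_mul, stdAddChar_coe, ← Complex.exp_add]
  congr 1
  have h0 : (q₀ : ℂ) ≠ 0 := NeZero.ne _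
  have h1 : (q₁ : ℂ) ≠ 0 := NeZero.ne _
  push_cast
  field_simp

theorem sum_units_pi_mul_of_bijective {ι R R₀ R₁ M : Type*} [CommRing R] [CommRing R₀]
    [CommRing R₁] [Fintype Rˣ] [Fintype R₀ˣ] [Fintype R₁ˣ] [Fintype (ι → R)]
    [Fintype (ι → R₀)] [Fintype (ι → R₁)] [CommSemiring M] (f₀ : R →+* R₀) (f₁ : R →+* R₁)
    (hf : Function.Bijective (f₀.prod f₁)) (g₀ : R₀ˣ → (ι → R₀) → M) (g₁ : R₁ˣ → (ι → R₁) → M) :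
    ∑ u : Rˣ, ∑ x : ι → R, g₀ (Units.map f₀ u) (f₀ ∘ x) * g₁ (Units.map f₁ u) (f₁ ∘ x) =
      (∑ u, ∑ x, g₀ u x) * (∑ u, ∑ x, g₁ u x) := by
  let e := RingEquiv.ofBijective _ hf
  let eUnits : Rˣ ≃ R₀ˣ × R₁ˣ := ((Units.mapEquiv e.toMulEquiv).trans MulEquiv.prodUnits).toEquiv
  let ePi : (ι → R) ≃ (ι → R₀) × (ι → R₁) :=
    (Equiv.piCongrRight fun _ => e.toEquiv).trans (Equiv.arrowProdEquivProdArrow _ _ _)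
  calc _ = ∑ u : R₀ˣ × R₁ˣ, ∑ x : (ι → R₀) × (ι → R₁), g₀ u.1 x.1 * g₁ u.2 x.2 :=
        Fintype.sum_equiv eUnits _ _ fun u => Fintype.sum_equiv ePi _ _ fun x => rfl
    _ = _ := by simp only [Fintype.sum_prod_type, sum_mul_sum]

section Reindex

variable {M : Type*} [AddCommMonoid M] (q : ℕ) [NeZero q]

theorem sum_coprime_eq_sum_units (g : ZMod q → M) :
    ∑ d ∈ (range q).filter (fun d => Nat.Coprime d q), g d = ∑ u : (ZMod q)ˣ, g u := by
  refine sum_bij' (fun d hd => unitOfCoprime d (mem_filter.1 hd).2) (fun u _ => (u : ZMod q).val)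
    (fun _ _ => mem_univ _)
    (fun u _ => mem_filter.2 ⟨mem_range.2 (val_lt _), val_coe_unit_coprime u⟩)
    (fun d hd => ?_) (fun u _ => Units.ext (natCast_zmod_val _))
    (fun d _ => by rw [coe_unitOfCoprime])
  rw [coe_unitOfCoprime, val_natCast, Nat.mod_eq_of_lt (mem_range.1 (mem_filter.1 hd).1)]

theorem sum_piFinset_range_eq_sum {ι : Type*} [Fintype ι] [DecidableEq ι]
    (g : (ι → ZMod q) → M) :
    ∑ h ∈ Fintype.piFinset (fun _ : ι => range q), g (fun i => (h i : ZMod q)) = ∑ x, g x := by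
  refine sum_nbij' (fun h i => (h i : ZMod q)) (fun x i => (x i).val) (fun _ _ => mem_univ _)
    (fun x _ => Fintype.mem_piFinset.2 fun i => mem_range.2 (val_lt _)) (fun h hh => ?_)
    (fun x _ => funext fun i => natCast_zmod_val _) (fun _ _ => rfl)
  funext i
  rw [val_natCast, Nat.mod_eq_of_lt (mem_range.1 (Fintype.mem_piFinset.1 hh i))]

end Reindex

section Kphase

variable {s : ℕ} {A : Matrix (Fin s) (Fin s) ℤ}

theorem quadGaussSum_eq_sum_zmod (hA : A.IsSymm) (hdiag : ∀ i, 2 ∣ A i i) (c : ℤ) (q : ℕ)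
    [NeZero q] (r : Fin s → ℤ) :
    quadGaussSum s A c q r =
      ∑ x : Fin s → ZMod q,
        stdAddChar ((c : ZMod q) * intQuadForm (upperHalf A) x + ∑ i, x i * r i) := by
  rw [quadGaussSum, ← sum_piFinset_range_eq_sum]
  refine sum_congr rfl fun h _ => ?_
  have hhalf : (∑ i, ∑ j, (h i : ℚ) * (A i j : ℚ) * (h j : ℚ)) / 2 =
      ((intQuadForm (upperHalf A) fun i => (h i : ℤ) : ℤ) : ℚ) := by
    rw [intCast_intQuadForm, div_eq_iff two_ne_zero, mul_comm, two_mul_intQuadForm,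
      upperHalf_add_transpose hA hdiag]
    simp [intQuadForm]
  rw [hhalf]
  calc _ = e (((c * intQuadForm (upperHalf A) (fun i => (h i : ℤ)) + ∑ i, h i * r i : ℤ) : ℝ)
        / q) := by push_cast; rfl
    _ = _ := by rw [e_intCast_div]; push_cast [intCast_intQuadForm]; rfl

def Kphase {R : Type*} [CommRing R] (A : Matrix (Fin s) (Fin s) ℤ) (ℓ n : ℤ) (r : Fin s → ℤ)
    (u : Rˣ) (x : Fin s → R) : R :=
  ℓ * u + n * ↑u⁻¹ + (-↑u⁻¹ * intQuadForm (upperHalf A) x + ∑ i, x i * r i)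

theorem map_Kphase {R S : Type*} [CommRing R] [CommRing S] (f : R →+* S) (ℓ n : ℤ)
    (r : Fin s → ℤ) (u : Rˣ) (x : Fin s → R) :
    f (Kphase A ℓ n r u x) = Kphase A ℓ n r (Units.map f u) (f ∘ x) := by
  simp [Kphase, map_intQuadForm]

theorem sum_coprime_twisted_eq_sum_units (hA : A.IsSymm) (hdiag : ∀ i, 2 ∣ A i i) (ℓ n : ℤ)
    (r : Fin s → ℤ) (q : ℕ) [NeZero q] (t : ℤ) :
    ∑ d ∈ (range q).filter (fun d => Nat.Coprime d q),
      e ((((t * (ℓ * d + n * (((d : ZMod q)⁻¹).val : ℤ)) : ℤ) : ℝ)) / q) *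
        quadGaussSum s A (-(t * (((d : ZMod q)⁻¹).val : ℤ))) q (fun i => t * r i) =
      ∑ u : (ZMod q)ˣ, ∑ x, stdAddChar ((t : ZMod q) * Kphase A ℓ n r u x) := by
  set g : ZMod q → ℂ := fun v => ∑ x : Fin s → ZMod q, stdAddChar ((t : ZMod q) *
    ((ℓ : ZMod q) * v + (n : ZMod q) * v⁻¹ + (-v⁻¹ * intQuadForm (upperHalf A) x + ∑ i, x i * r i)))
  have hunit (u : (ZMod q)ˣ) : ∑ x, stdAddChar ((t : ZMod q) * Kphase A ℓ n r u x) = g u := by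
    simp only [g, Kphase, inv_coe_unit]
  rw [sum_congr rfl fun u _ => hunit u, ← sum_coprime_eq_sum_units]
  refine sum_congr rfl fun d _ => ?_
  rw [e_intCast_div, quadGaussSum_eq_sum_zmod hA hdiag, mul_sum]
  refine sum_congr rfl fun x _ => ?_
  rw [← AddChar.map_add_eq_mul]
  congr 1
  push_cast [natCast_val, cast_id]
  simp only [mul_left_comm _ (t : ZMod q), ← mul_sum]
  ring

theorem Ksum_eq_sum_units (hA : A.IsSymm) (hdiag : ∀ i, 2 ∣ A i i) (ℓ n : ℤ) (r : Fin s → ℤ)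
    (q : ℕ) [NeZero q] :
    Ksum s A ℓ n r q = ∑ u : (ZMod q)ˣ, ∑ x, stdAddChar (Kphase A ℓ n r u x) := by
  rw [Ksum]
  simpa only [one_mul, Int.cast_one] using sum_coprime_twisted_eq_sum_units hA hdiag ℓ n r q 1

theorem KsumTwist_eq_sum_units (hA : A.IsSymm) (hdiag : ∀ i, 2 ∣ A i i) (ℓ n : ℤ)
    (r : Fin s → ℤ) (q' q : ℕ) [NeZero q] :
    KsumTwist s A ℓ n r q' q =
      ∑ u : (ZMod q)ˣ, ∑ x, stdAddChar ((q' : ZMod q)⁻¹ * Kphase A ℓ n r u x) := by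
  rw [KsumTwist, sum_coprime_twisted_eq_sum_units hA hdiag]
  simp only [Int.cast_natCast, natCast_zmod_val]

end Kphase

/-- Chinese-remainder factorization of the complete sum `K`:
for coprime `q₀, q₁`, `K(ℓ,n,r;q₀q₁) = K^{(q₁)}(ℓ,n,r;q₀) · K^{(q₀)}(ℓ,n,r;q₁)`. -/
theorem Ksum_factorization (s : ℕ) (A : Matrix (Fin s) (Fin s) ℤ) (hA : A.IsSymm)
    (hdiag : ∀ i, 2 ∣ A i i) (q₀ q₁ : ℕ) (h0 : 0 < q₀) (h1 : 0 < q₁)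
    (hco : Nat.Coprime q₀ q₁) (ℓ n : ℤ) (r : Fin s → ℤ) :
    Ksum s A ℓ n r (q₀ * q₁) = KsumTwist s A ℓ n r q₁ q₀ * KsumTwist s A ℓ n r q₀ q₁ := by
  have : NeZero q₀ := ⟨h0.ne'⟩
  have : NeZero q₁ := ⟨h1.ne'⟩
  rw [Ksum_eq_sum_units hA hdiag, KsumTwist_eq_sum_units hA hdiag,
    KsumTwist_eq_sum_units hA hdiag,
    ← sum_units_pi_mul_of_bijective _ _ (castHom_prod_castHom_bijective hco)]
  simp only [stdAddChar_eq_mul_of_coprime hco, map_Kphase]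
end
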